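/- arXiv:1612.03689 — 4 statements merged into one kernel-verified Lean document; each statement's English description precedes it below -/
import Mathlib

section
/- Let μ and ν be probability measures on ℝ with densities ρ_μ, ρ_ν positive and continuous on open intervals (a_μ,b_μ) and (a_ν,b_ν) respectively, vanishing outside. Then the monotone transport map T = F_ν⁻¹ ∘ F_μ is well defined and differentiable on (a_μ,b_μ) with derivative T' = ρ_μ / (ρ_ν ∘ F_ν⁻¹ ∘ F_μ), and its Lipschitz norm equals sup over (0,1) of (ρ_μ ∘ F_μ⁻¹) / (ρ_ν ∘ F_ν⁻¹). -/
open MeasureTheory Real Set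

/-- Variance of `f` under `μ`, as `inf_a ∫ (f-a)^2 dμ`. -/
noncomputable def Var (μ : Measure ℝ) (f : ℝ → ℝ) : ℝ := ⨅ a : ℝ, ∫ x, (f x - a)^2 ∂μ

/-- `μ` satisfies a Poincaré inequality with constant `C`, over test functions that are
differentiable on the supporting interval `s` with `f, f' ∈ L²(μ)`. -/
def PoincareOn (μ : Measure ℝ) (s : Set ℝ) (C : ℝ) : Prop :=
  ∀ f f' : ℝ → ℝ, (∀ x ∈ s, HasDerivAt f (f' x) x) →
    Integrable (fun x => (f x)^2) μ → Integrable (fun x => (f' x)^2) μ →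
    Var μ f ≤ C * ∫ x, (f' x)^2 ∂μ

/-- The optimal Poincaré constant of `μ` on the interval `s`. -/
noncomputable def CP (μ : Measure ℝ) (s : Set ℝ) : ℝ := sInf {C | 0 ≤ C ∧ PoincareOn μ s C}

/-!
On its support a density is continuous and positive, so its distribution function is a
`C¹` strictly increasing map of the support into `(0,1)`. The inverse function theorem then
makes the quantile `G = Fν⁻¹` differentiable with `G' = 1 / (ρν ∘ G)`, and the chain rule
gives `T'`. On an open interval the best Lipschitz constant of a differentiable map is
`sup |T'|` (mean value inequality in one direction, difference quotients in the other), and the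
substitution `x = H u` turns the supremum over `Sμ` into the one over `(0,1)`.
-/

open Filter

namespace Real

/-- When `D` is not bounded above both sides are the junk value `0`. -/
theorem sInf_upperBounds_eq_sSup {D : Set ℝ} (hne : D.Nonempty) :
    sInf (upperBounds D) = sSup D := by
  by_cases hbdd : BddAbove D
  · rw [(isLUB_csSup hne hbdd).upperBounds_eq, csInf_Ici]
  · rw [not_nonempty_iff_eq_empty.1 hbdd, Real.sInf_empty, Real.sSup_of_not_bddAbove hbdd]

end Real

theorem lipschitzConstants_eq_upperBounds_abs_deriv {S : Set ℝ} {f f' : ℝ → ℝ}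
    (hSo : IsOpen S) (hSc : Convex ℝ S) (hne : S.Nonempty)
    (hf : ∀ x ∈ S, HasDerivAt f (f' x) x) :
    {L : ℝ | 0 ≤ L ∧ ∀ x ∈ S, ∀ y ∈ S, |f x - f y| ≤ L * |x - y|}
      = upperBounds ((fun x => |f' x|) '' S) := by
  ext L
  constructor
  · rintro ⟨hL0, hLip⟩ _ ⟨x, hx, rfl⟩
    have hlip : LipschitzOnWith L.toNNReal f S := .of_dist_le' hLip
    simpa [(hf x hx).deriv, hL0] using norm_deriv_le_of_lipschitzOn (hSo.mem_nhds hx) hlip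
  · intro hL
    obtain ⟨x₀, hx₀⟩ := hne
    refine ⟨(abs_nonneg _).trans (hL ⟨x₀, hx₀, rfl⟩), fun x hx y hy => ?_⟩
    simpa using hSc.norm_image_sub_le_of_norm_hasDerivWithin_le
      (fun z hz => (hf z hz).hasDerivWithinAt) (fun z hz => hL ⟨z, hz, rfl⟩) hy hx

section Cdf

variable {ρ F : ℝ → ℝ}

theorem mem_Icc_of_eq_setIntegral_Iic (hnn : 0 ≤ ρ) (hprob : ∫ t, ρ t = 1)
    (hF : ∀ x, F x = ∫ t in Iic x, ρ t) (x : ℝ) : F x ∈ Icc (0 : ℝ) 1 := by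
  rw [hF x]
  refine ⟨setIntegral_nonneg measurableSet_Iic fun t _ => hnn t, hprob ▸ ?_⟩
  exact setIntegral_le_integral (.of_integral_ne_zero (by simp [hprob])) (.of_forall hnn)

theorem hasDerivAt_of_eq_setIntegral_Iic (hρ : Integrable ρ) (hF : ∀ x, F x = ∫ t in Iic x, ρ t)
    {x : ℝ} (hx : ContinuousAt ρ x) : HasDerivAt F (ρ x) x := by
  have hF0 : F = fun y => F 0 + ∫ t in (0 : ℝ)..y, ρ t := by
    funext y
    rw [hF y, hF 0, ← intervalIntegral.integral_Iic_sub_Iic hρ.integrableOn hρ.integrableOn]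
    ring
  rw [hF0]
  exact (intervalIntegral.integral_hasDerivAt_right hρ.intervalIntegrable
    hρ.aestronglyMeasurable.stronglyMeasurableAtFilter hx).const_add _

end Cdf

theorem strictMonoOn_of_hasDerivAt_pos {S : Set ℝ} {F ρ : ℝ → ℝ} (hSc : Convex ℝ S)
    (hF : ∀ x ∈ S, HasDerivAt F (ρ x) x) (hpos : ∀ x ∈ S, 0 < ρ x) : StrictMonoOn F S :=
  strictMonoOn_of_hasDerivWithinAt_pos hSc
    (fun x hx => (hF x hx).continuousAt.continuousWithinAt)
    (fun x hx => (hF x (interior_subset hx)).hasDerivWithinAt)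
    (fun x hx => hpos x (interior_subset hx))

theorem mapsTo_Ioo_of_eq_setIntegral_Iic {S : Set ℝ} {ρ F : ℝ → ℝ} (hSo : IsOpen S)
    (hnn : 0 ≤ ρ) (hprob : ∫ t, ρ t = 1) (hF : ∀ x, F x = ∫ t in Iic x, ρ t)
    (hmono : StrictMonoOn F S) : MapsTo F S (Ioo 0 1) := fun x hx => by
  obtain ⟨a, hax, haS⟩ := Eventually.exists_lt (hSo.mem_nhds hx)
  obtain ⟨b, hxb, hbS⟩ := Eventually.exists_gt (hSo.mem_nhds hx)
  exact ⟨(mem_Icc_of_eq_setIntegral_Iic hnn hprob hF a).1.trans_lt (hmono haS hx hax),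
    (hmono hx hbS hxb).trans_le (mem_Icc_of_eq_setIntegral_Iic hnn hprob hF b).2⟩

section RightInverse

variable {S I : Set ℝ} {F G : ℝ → ℝ}

theorem continuousAt_of_rightInvOn (hSo : IsOpen S) (hIo : IsOpen I) (hF : StrictMonoOn F S)
    (hFS : MapsTo F S I) (hGI : MapsTo G I S) (hGF : RightInvOn G F I) {u : ℝ} (hu : u ∈ I) :
    ContinuousAt G u := by
  have hG : StrictMonoOn G I := fun v hv w hw hvw => lt_of_not_ge fun hwv => hvw.not_ge <| by
    simpa only [hGF hv, hGF hw] using hF.monotoneOn (hGI hw) (hGI hv) hwv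
  have hSG : S ⊆ G '' I := fun x hx =>
    ⟨F x, hFS hx, hF.injOn (hGI (hFS hx)) hx (hGF (hFS hx))⟩
  exact hG.continuousAt_of_image_mem_nhds (hIo.mem_nhds hu)
    (mem_of_superset (hSo.mem_nhds (hGI hu)) hSG)

theorem hasDerivAt_of_rightInvOn {F' : ℝ → ℝ} (hSo : IsOpen S) (hIo : IsOpen I)
    (hF : StrictMonoOn F S) (hF' : ∀ x ∈ S, HasDerivAt F (F' x) x) (hF'0 : ∀ x ∈ S, F' x ≠ 0)
    (hFS : MapsTo F S I) (hGI : MapsTo G I S) (hGF : RightInvOn G F I) {u : ℝ} (hu : u ∈ I) :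
    HasDerivAt G (F' (G u))⁻¹ u :=
  (hF' _ (hGI hu)).of_local_left_inverse (continuousAt_of_rightInvOn hSo hIo hF hFS hGI hGF hu)
    (hF'0 _ (hGI hu)) (eventually_of_mem (hIo.mem_nhds hu) hGF)

end RightInverse

theorem cdf_hasDerivAt_strictMonoOn_mapsTo {S : Set ℝ} {ρ F : ℝ → ℝ} (hSo : IsOpen S)
    (hSc : S.OrdConnected) (hc : ContinuousOn ρ S) (hpos : ∀ x ∈ S, 0 < ρ x)
    (h0 : ∀ x ∉ S, ρ x = 0) (hprob : ∫ t, ρ t = 1) (hF : ∀ x, F x = ∫ t in Iic x, ρ t) :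
    (∀ x ∈ S, HasDerivAt F (ρ x) x) ∧ StrictMonoOn F S ∧ MapsTo F S (Ioo 0 1) := by
  have hρ : Integrable ρ := .of_integral_ne_zero (by simp [hprob])
  have hnn : 0 ≤ ρ := fun x => by
    by_cases hx : x ∈ S
    exacts [(hpos x hx).le, (h0 x hx).ge]
  have hF' : ∀ x ∈ S, HasDerivAt F (ρ x) x := fun x hx =>
    hasDerivAt_of_eq_setIntegral_Iic hρ hF (hc.continuousAt (hSo.mem_nhds hx))
  have hmono := strictMonoOn_of_hasDerivAt_pos hSc.convex hF' hpos
  exact ⟨hF', hmono, mapsTo_Ioo_of_eq_setIntegral_Iic hSo hnn hprob hF hmono⟩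

theorem stmt2_general (Sμ Sν : Set ℝ)
    (hSμo : IsOpen Sμ) (hSμc : Sμ.OrdConnected) (hSμne : Sμ.Nonempty)
    (hSνo : IsOpen Sν) (hSνc : Sν.OrdConnected)
    (ρμ ρν : ℝ → ℝ)
    (hcμ : ContinuousOn ρμ Sμ) (hposμ : ∀ x ∈ Sμ, 0 < ρμ x) (h0μ : ∀ x ∉ Sμ, ρμ x = 0)
    (hcν : ContinuousOn ρν Sν) (hposν : ∀ x ∈ Sν, 0 < ρν x) (h0ν : ∀ x ∉ Sν, ρν x = 0)
    (hprobμ : ∫ t, ρμ t = 1) (hprobν : ∫ t, ρν t = 1)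
    (Fμ Fν : ℝ → ℝ)
    (hFμ : ∀ x, Fμ x = ∫ t in Set.Iic x, ρμ t)
    (hFν : ∀ x, Fν x = ∫ t in Set.Iic x, ρν t)
    -- `G` is the inverse of `Fν`, `H` the inverse of `Fμ`, on `(0,1)`
    (G H : ℝ → ℝ)
    (hG : ∀ u ∈ Set.Ioo (0:ℝ) 1, G u ∈ Sν ∧ Fν (G u) = u)
    (hH : ∀ u ∈ Set.Ioo (0:ℝ) 1, H u ∈ Sμ ∧ Fμ (H u) = u)
    (T : ℝ → ℝ) (hT : ∀ x, T x = G (Fμ x)) :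
    (∀ x ∈ Sμ, HasDerivAt T (ρμ x / ρν (T x)) x) ∧
    sInf {L : ℝ | 0 ≤ L ∧ ∀ x ∈ Sμ, ∀ y ∈ Sμ, |T x - T y| ≤ L * |x - y|}
      = sSup ((fun u => ρμ (H u) / ρν (G u)) '' Set.Ioo (0:ℝ) 1) := by
  obtain ⟨hFμ', hFμ_mono, hFμ_maps⟩ :=
    cdf_hasDerivAt_strictMonoOn_mapsTo hSμo hSμc hcμ hposμ h0μ hprobμ hFμ
  obtain ⟨hFν', hFν_mono, hFν_maps⟩ :=
    cdf_hasDerivAt_strictMonoOn_mapsTo hSνo hSνc hcν hposν h0ν hprobν hFν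
  have hG' : ∀ u ∈ Ioo (0 : ℝ) 1, HasDerivAt G (ρν (G u))⁻¹ u := fun u =>
    hasDerivAt_of_rightInvOn hSνo isOpen_Ioo hFν_mono hFν' (fun x hx => (hposν x hx).ne')
      hFν_maps (fun v hv => (hG v hv).1) (fun v hv => (hG v hv).2)
  have hT' : ∀ x ∈ Sμ, HasDerivAt T (ρμ x / ρν (T x)) x := fun x hx => by
    rw [show T = G ∘ Fμ from funext hT]
    simpa only [Function.comp_apply, div_eq_inv_mul] using (hG' _ (hFμ_maps hx)).comp x (hFμ' x hx)
  have hHF : ∀ x ∈ Sμ, H (Fμ x) = x := fun x hx =>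
    hFμ_mono.injOn (hH _ (hFμ_maps hx)).1 hx (hH _ (hFμ_maps hx)).2
  have hH_bij : BijOn H (Ioo 0 1) Sμ :=
    InvOn.bijOn ⟨fun u hu => (hH u hu).2, hHF⟩ (fun u hu => (hH u hu).1) hFμ_maps
  have hT'_image : (fun x => |ρμ x / ρν (T x)|) '' Sμ
      = (fun u => ρμ (H u) / ρν (G u)) '' Ioo (0 : ℝ) 1 := by
    rw [← hH_bij.image_eq, image_image]
    refine image_congr fun u hu => ?_
    rw [hT, (hH u hu).2, abs_of_pos (div_pos (hposμ _ (hH u hu).1) (hposν _ (hG u hu).1))]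
  refine ⟨hT', ?_⟩
  rw [lipschitzConstants_eq_upperBounds_abs_deriv hSμo hSμc.convex hSμne hT', hT'_image,
    Real.sInf_upperBounds_eq_sSup ((nonempty_Ioo.2 one_pos).image _)]

/-- the monotone transport map, its derivative and its Lipschitz norm. -/
theorem stmt2 (Sμ Sν : Set ℝ)
    (hSμo : IsOpen Sμ) (hSμc : Sμ.OrdConnected) (hSμne : Sμ.Nonempty)
    (hSνo : IsOpen Sν) (hSνc : Sν.OrdConnected) (hSνne : Sν.Nonempty)
    (ρμ ρν : ℝ → ℝ)
    (hcμ : ContinuousOn ρμ Sμ) (hposμ : ∀ x ∈ Sμ, 0 < ρμ x) (h0μ : ∀ x ∉ Sμ, ρμ x = 0)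
    (hcν : ContinuousOn ρν Sν) (hposν : ∀ x ∈ Sν, 0 < ρν x) (h0ν : ∀ x ∉ Sν, ρν x = 0)
    (hprobμ : ∫ t, ρμ t = 1) (hprobν : ∫ t, ρν t = 1)
    (Fμ Fν : ℝ → ℝ)
    (hFμ : ∀ x, Fμ x = ∫ t in Set.Iic x, ρμ t)
    (hFν : ∀ x, Fν x = ∫ t in Set.Iic x, ρν t)
    -- `G` is the inverse of `Fν`, `H` the inverse of `Fμ`, on `(0,1)`
    (G H : ℝ → ℝ)
    (hG : ∀ u ∈ Set.Ioo (0:ℝ) 1, G u ∈ Sν ∧ Fν (G u) = u)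
    (hH : ∀ u ∈ Set.Ioo (0:ℝ) 1, H u ∈ Sμ ∧ Fμ (H u) = u)
    (T : ℝ → ℝ) (hT : ∀ x, T x = G (Fμ x)) :
    (∀ x ∈ Sμ, HasDerivAt T (ρμ x / ρν (T x)) x) ∧
    sInf {L : ℝ | 0 ≤ L ∧ ∀ x ∈ Sμ, ∀ y ∈ Sμ, |T x - T y| ≤ L * |x - y|}
      = sSup ((fun u => ρμ (H u) / ρν (G u)) '' Set.Ioo (0:ℝ) 1) :=
  stmt2_general Sμ Sν hSμo hSμc hSμne hSνo hSνc ρμ ρν hcμ hposμ h0μ hcν hposν h0ν hprobμ hprobν Fμ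
    Fν hFμ hFν G H hG hH T hT
end

section
/- Let μ be an even probability measure on ℝ supported on a symmetric interval, absolutely continuous with positive continuous density in the interior of its support. Then for any non-constant function f ∈ H¹(μ), there exists an odd function g ∈ H¹(μ) with ∫(f')² dμ / Var_μ(f) ≥ ∫(g')² dμ / Var_μ(g). -/
/-!
Split `f = g + h` into its odd and even parts. Since `μ` is even, all cross terms integrate to
zero, so `Var f = Var g + Var h` and `∫ f'² = ∫ g'² + ∫ h'²`; by the mediant inequality one of
`∫ g'² / Var g`, `∫ h'² / Var h` is at most the quotient of `f`. If it is the one of `g`, take `g`.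
Otherwise take the odd reflection `sign x * (h x - h 0)` of `h`: it is differentiable at `0`
because `h'(0) = 0`, has the same energy as `h`, and its variance `∫ (h - h 0)²` is at least
`Var h`.
-/

open MeasureTheory Real Set

open ProbabilityTheory Filter Topology
open scoped ENNReal

lemma integral_sub_sq_eq_variance_add {Ω : Type*} [MeasurableSpace Ω] {μ : Measure Ω}
    [IsProbabilityMeasure μ] {f : Ω → ℝ} (hf : MemLp f 2 μ) (a : ℝ) :
    ∫ x, (f x - a) ^ 2 ∂μ = variance f μ + (μ[f] - a) ^ 2 := by
  have hmean : μ[fun x => f x - a] = μ[f] - a := by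
    rw [integral_sub (hf.integrable one_le_two) (integrable_const a)]
    simp
  rw [← variance_sub_const hf.aestronglyMeasurable a,
    variance_eq_sub (X := fun x => f x - a) (hf.sub (memLp_const a)), hmean]
  simp only [Pi.pow_apply]
  ring

lemma Var_le_integral_sub_sq (μ : Measure ℝ) (f : ℝ → ℝ) (a : ℝ) :
    Var μ f ≤ ∫ x, (f x - a) ^ 2 ∂μ :=
  ciInf_le ⟨0, by rintro _ ⟨a, rfl⟩; exact integral_nonneg fun _ => sq_nonneg _⟩ a

lemma Var_eq_variance {μ : Measure ℝ} [IsProbabilityMeasure μ] {f : ℝ → ℝ} (hf : MemLp f 2 μ) :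
    Var μ f = variance f μ :=
  le_antisymm (by simpa [integral_sub_sq_eq_variance_add hf] using Var_le_integral_sub_sq μ f μ[f])
    (le_ciInf fun a => by
      rw [integral_sub_sq_eq_variance_add hf]
      exact le_add_of_nonneg_right (sq_nonneg _))

lemma div_le_add_div_add_or_div_le_add_div_add {a b c d : ℝ} (ha : 0 ≤ a) (hb : 0 ≤ b)
    (hc : 0 ≤ c) (hd : 0 ≤ d) (hcd : 0 < c + d) :
    (0 < c ∧ a / c ≤ (a + b) / (c + d)) ∨ (0 < d ∧ b / d ≤ (a + b) / (c + d)) := by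
  rcases hc.eq_or_lt with rfl | hc
  · right
    rw [zero_add] at hcd ⊢
    exact ⟨hcd, div_le_div_of_nonneg_right (le_add_of_nonneg_left ha) hd⟩
  rcases hd.eq_or_lt with rfl | hd
  · left
    rw [add_zero]
    exact ⟨hc, div_le_div_of_nonneg_right (le_add_of_nonneg_right hb) hc.le⟩
  by_cases h : a / c ≤ (a + b) / (c + d)
  · exact .inl ⟨hc, h⟩
  · right
    rw [not_le, div_lt_div_iff₀ hcd hc] at h
    refine ⟨hd, (div_le_div_iff₀ hd hcd).2 ?_⟩
    nlinarith

section Parity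

variable {G : Type*}

noncomputable def oddPart [Neg G] (f : G → ℝ) (x : G) : ℝ := (f x - f (-x)) / 2

noncomputable def evenPart [Neg G] (f : G → ℝ) (x : G) : ℝ := (f x + f (-x)) / 2

variable [AddGroup G]

lemma oddPart_neg (f : G → ℝ) (x : G) : oddPart f (-x) = -oddPart f x := by
  simp only [oddPart, neg_neg]; ring

lemma evenPart_neg (f : G → ℝ) (x : G) : evenPart f (-x) = evenPart f x := by
  simp only [evenPart, neg_neg]; ring

lemma oddPart_add_evenPart (f : G → ℝ) : oddPart f + evenPart f = f := by
  ext x; simp only [Pi.add_apply, oddPart, evenPart]; ring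

variable [MeasurableSpace G] [MeasurableNeg G] {μ : Measure G} [μ.IsNegInvariant]
  {f u v : G → ℝ}

lemma integral_eq_zero_of_odd (hu : ∀ x, u (-x) = -u x) : ∫ x, u x ∂μ = 0 := by
  have h := integral_neg_eq_self u μ
  simp_rw [hu, integral_neg] at h
  linarith

lemma covariance_eq_zero_of_odd_of_even (hu : ∀ x, u (-x) = -u x) (hv : ∀ x, v (-x) = v x) :
    cov[u, v; μ] = 0 := by
  rw [covariance, integral_eq_zero_of_odd hu]
  exact integral_eq_zero_of_odd fun x => by rw [hu, hv]; ring

lemma integral_add_sq_of_odd_of_even (hu2 : MemLp u 2 μ) (hv2 : MemLp v 2 μ)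
    (hu : ∀ x, u (-x) = -u x) (hv : ∀ x, v (-x) = v x) :
    ∫ x, (u x + v x) ^ 2 ∂μ = ∫ x, u x ^ 2 ∂μ + ∫ x, v x ^ 2 ∂μ := by
  have huv : Integrable (fun x => 2 * (u x * v x)) μ := (hu2.integrable_mul hv2).const_mul 2
  have hcross : ∫ x, 2 * (u x * v x) ∂μ = 0 :=
    integral_eq_zero_of_odd fun x => by rw [hu, hv]; ring
  calc ∫ x, (u x + v x) ^ 2 ∂μ = ∫ x, (u x ^ 2 + 2 * (u x * v x)) + v x ^ 2 ∂μ := by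
        congr 1; ext x; ring
    _ = ∫ x, u x ^ 2 ∂μ + ∫ x, v x ^ 2 ∂μ := by
        rw [integral_add (f := fun x => u x ^ 2 + 2 * (u x * v x))
          (hu2.integrable_sq.add huv) hv2.integrable_sq,
          integral_add hu2.integrable_sq huv, hcross, add_zero]

lemma MeasureTheory.MemLp.comp_neg {p : ℝ≥0∞} (hf : MemLp f p μ) :
    MemLp (fun x => f (-x)) p μ :=
  hf.comp_measurePreserving (Measure.measurePreserving_neg μ)

lemma MeasureTheory.MemLp.oddPart {p : ℝ≥0∞} (hf : MemLp f p μ) : MemLp (oddPart f) p μ := by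
  convert (hf.sub hf.comp_neg).mul_const 2⁻¹ using 1
  ext x
  simp only [_root_.oddPart, Pi.sub_apply, div_eq_mul_inv]

lemma MeasureTheory.MemLp.evenPart {p : ℝ≥0∞} (hf : MemLp f p μ) : MemLp (evenPart f) p μ := by
  convert (hf.add hf.comp_neg).mul_const 2⁻¹ using 1
  ext x
  simp only [_root_.evenPart, Pi.add_apply, div_eq_mul_inv]

lemma integral_sq_oddPart_add_integral_sq_evenPart (hf : MemLp f 2 μ) :
    ∫ x, oddPart f x ^ 2 ∂μ + ∫ x, evenPart f x ^ 2 ∂μ = ∫ x, f x ^ 2 ∂μ := by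
  conv_rhs => rw [← oddPart_add_evenPart f]
  exact (integral_add_sq_of_odd_of_even hf.oddPart hf.evenPart (oddPart_neg f)
    (evenPart_neg f)).symm

lemma variance_oddPart_add_variance_evenPart [IsFiniteMeasure μ] (hf : MemLp f 2 μ) :
    variance (oddPart f) μ + variance (evenPart f) μ = variance f μ := by
  conv_rhs => rw [← oddPart_add_evenPart f]
  rw [variance_add hf.oddPart hf.evenPart,
    covariance_eq_zero_of_odd_of_even (oddPart_neg f) (evenPart_neg f)]
  ring

end Parity

section Sign

lemma Real.measurable_sign : Measurable Real.sign := by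
  unfold Real.sign
  exact Measurable.ite measurableSet_Iio measurable_const
    (Measurable.ite measurableSet_Ioi measurable_const measurable_const)

lemma Real.norm_sign_mul_le (x a : ℝ) : ‖Real.sign x * a‖ ≤ ‖a‖ := by
  rcases Real.sign_apply_eq x with h | h | h <;> simp [h]

lemma Real.sign_sq_mul_sq {x a : ℝ} (h : x = 0 → a = 0) : Real.sign x ^ 2 * a ^ 2 = a ^ 2 := by
  rcases eq_or_ne x 0 with rfl | hx
  · simp [h rfl]
  · rcases Real.sign_apply_eq_of_ne_zero x hx with h | h <;> simp [h]

lemma MeasureTheory.MemLp.sign_mul {μ : Measure ℝ} {p : ℝ≥0∞} {f : ℝ → ℝ} (hf : MemLp f p μ) :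
    MemLp (fun x => Real.sign x * f x) p μ :=
  hf.mono (Real.measurable_sign.aestronglyMeasurable.mul hf.aestronglyMeasurable)
    (ae_of_all _ fun x => Real.norm_sign_mul_le x (f x))

end Sign

section Derivatives

variable {f f' : ℝ → ℝ} {x : ℝ}

lemma HasDerivAt.comp_neg {g : ℝ → ℝ} {g' : ℝ} (h : HasDerivAt g g' (-x)) :
    HasDerivAt (fun y => g (-y)) (-g') x := by
  simpa [Function.comp_def] using h.comp x (hasDerivAt_neg x)

lemma hasDerivAt_oddPart (hx : HasDerivAt f (f' x) x) (hnx : HasDerivAt f (f' (-x)) (-x)) :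
    HasDerivAt (oddPart f) (evenPart f' x) x := by
  rw [show evenPart f' x = (f' x - -f' (-x)) / 2 by rw [evenPart, sub_neg_eq_add]]
  exact (hx.sub hnx.comp_neg).div_const 2

lemma hasDerivAt_evenPart (hx : HasDerivAt f (f' x) x) (hnx : HasDerivAt f (f' (-x)) (-x)) :
    HasDerivAt (evenPart f) (oddPart f' x) x := by
  rw [show oddPart f' x = (f' x + -f' (-x)) / 2 by rw [oddPart, sub_eq_add_neg]]
  exact (hx.add hnx.comp_neg).div_const 2

lemma HasDerivAt.sign_mul {φ φ' : ℝ → ℝ} (hφ : HasDerivAt φ (φ' x) x) (hφ0 : φ 0 = 0)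
    (hφ'0 : φ' 0 = 0) :
    HasDerivAt (fun y => Real.sign y * φ y) (Real.sign x * φ' x) x := by
  rcases lt_trichotomy x 0 with hx | rfl | hx
  · have hloc : (fun y => Real.sign y * φ y) =ᶠ[𝓝 x] fun y => -φ y := by
      filter_upwards [Iio_mem_nhds hx] with y hy
      rw [Real.sign_of_neg hy, neg_one_mul]
    rw [Real.sign_of_neg hx, neg_one_mul]
    exact hφ.neg.congr_of_eventuallyEq hloc
  · rw [hφ'0] at hφ
    rw [Real.sign_zero, zero_mul]
    rw [hasDerivAt_iff_isLittleO] at hφ ⊢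
    simp only [hφ0, Real.sign_zero, zero_mul, sub_zero, smul_zero] at hφ ⊢
    refine Asymptotics.IsBigO.trans_isLittleO (Asymptotics.IsBigO.of_bound 1 ?_) hφ
    exact Eventually.of_forall fun y => (one_mul ‖φ y‖).symm ▸ Real.norm_sign_mul_le y (φ y)
  · have hloc : (fun y => Real.sign y * φ y) =ᶠ[𝓝 x] φ := by
      filter_upwards [Ioi_mem_nhds hx] with y hy
      rw [Real.sign_of_pos hy, one_mul]
    rw [Real.sign_of_pos hx, one_mul]
    exact hφ.congr_of_eventuallyEq hloc

end Derivatives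

section Reflection

variable {μ : Measure ℝ} [IsProbabilityMeasure μ] [μ.IsNegInvariant] {s : Set ℝ} {h h' : ℝ → ℝ}

lemma exists_odd_variance_ge_of_even (hh : ∀ x ∈ s, HasDerivAt h (h' x) x)
    (h_even : ∀ x, h (-x) = h x) (h'0 : h' 0 = 0) (hh2 : MemLp h 2 μ) (hh'2 : MemLp h' 2 μ) :
    ∃ k k' : ℝ → ℝ, (∀ x, k (-x) = -k x) ∧ (∀ x ∈ s, HasDerivAt k (k' x) x) ∧
      MemLp k 2 μ ∧ MemLp k' 2 μ ∧ variance h μ ≤ variance k μ ∧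
      ∫ x, k' x ^ 2 ∂μ = ∫ x, h' x ^ 2 ∂μ := by
  set k : ℝ → ℝ := fun x => Real.sign x * (h x - h 0)
  set k' : ℝ → ℝ := fun x => Real.sign x * h' x
  have hk_odd : ∀ x, k (-x) = -k x := fun x => by
    simp only [k, Real.sign_neg, h_even]; ring
  have hk_sq : ∀ x, k x ^ 2 = (h x - h 0) ^ 2 := fun x => by
    rw [mul_pow, Real.sign_sq_mul_sq (fun hx => by rw [hx, sub_self])]
  have hk'_sq : ∀ x, k' x ^ 2 = h' x ^ 2 := fun x => by
    rw [mul_pow, Real.sign_sq_mul_sq (fun hx => by rw [hx, h'0])]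
  have hk2 : MemLp k 2 μ := (hh2.sub (memLp_const (h 0))).sign_mul
  refine ⟨k, k', hk_odd, fun x hx => ((hh x hx).sub_const (h 0)).sign_mul (sub_self _) h'0, hk2,
    hh'2.sign_mul, ?_, by simp only [hk'_sq]⟩
  calc variance h μ ≤ ∫ x, (h x - h 0) ^ 2 ∂μ := by
        rw [integral_sub_sq_eq_variance_add hh2]
        exact le_add_of_nonneg_right (sq_nonneg _)
    _ = variance k μ := by
        rw [variance_of_integral_eq_zero hk2.aemeasurable (integral_eq_zero_of_odd hk_odd)]
        simp only [hk_sq]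

end Reflection

theorem exists_odd_div_variance_le {μ : Measure ℝ} [IsProbabilityMeasure μ] [μ.IsNegInvariant]
    {s : Set ℝ} (hs : ∀ x ∈ s, -x ∈ s) {f f' : ℝ → ℝ} (hf : ∀ x ∈ s, HasDerivAt f (f' x) x)
    (hf2 : MemLp f 2 μ) (hf'2 : MemLp f' 2 μ) (hvar : 0 < variance f μ) :
    ∃ g g' : ℝ → ℝ, (∀ x, g (-x) = -g x) ∧ (∀ x ∈ s, HasDerivAt g (g' x) x) ∧
      MemLp g 2 μ ∧ MemLp g' 2 μ ∧ 0 < variance g μ ∧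
      (∫ x, g' x ^ 2 ∂μ) / variance g μ ≤ (∫ x, f' x ^ 2 ∂μ) / variance f μ := by
  obtain ⟨k, k', hk_odd, hk, hk2, hk'2, hvar_k, henergy_k⟩ :=
    exists_odd_variance_ge_of_even (μ := μ)
      (fun x hx => hasDerivAt_evenPart (hf x hx) (hf _ (hs x hx))) (evenPart_neg f)
      (by simp [oddPart]) hf2.evenPart hf'2.oddPart
  rw [← variance_oddPart_add_variance_evenPart hf2] at hvar ⊢
  rw [← integral_sq_oddPart_add_integral_sq_evenPart hf'2, add_comm (∫ x, oddPart f' x ^ 2 ∂μ)]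
  rcases div_le_add_div_add_or_div_le_add_div_add
      (integral_nonneg fun x => sq_nonneg (evenPart f' x))
      (integral_nonneg fun x => sq_nonneg (oddPart f' x)) (variance_nonneg _ _)
      (variance_nonneg _ _) hvar with ⟨hpos, hle⟩ | ⟨hpos, hle⟩
  · exact ⟨oddPart f, evenPart f', oddPart_neg f,
      fun x hx => hasDerivAt_oddPart (hf x hx) (hf _ (hs x hx)), hf2.oddPart, hf'2.evenPart,
      hpos, hle⟩
  · refine ⟨k, k', hk_odd, hk, hk2, hk'2, hpos.trans_le hvar_k, ?_⟩
    rw [henergy_k]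
    exact (div_le_div_of_nonneg_left (integral_nonneg fun x => sq_nonneg _) hpos hvar_k).trans hle

section Density

variable {X : Type*} [MeasurableSpace X] {ν : Measure X} {ρ : X → ℝ≥0∞}

lemma ae_mem_withDensity {s : Set X} (hρ : Measurable ρ) (h0 : ∀ x ∉ s, ρ x = 0) :
    ∀ᵐ x ∂ν.withDensity ρ, x ∈ s :=
  (ae_withDensity_iff hρ).2 (ae_of_all _ fun x hx => not_not.1 (mt (h0 x) hx))

lemma eqOn_of_ae_eq_withDensity [TopologicalSpace X] [OpensMeasurableSpace X]
    [ν.IsOpenPosMeasure] {Y : Type*} [TopologicalSpace Y] [T2Space Y] {U : Set X} (hU : IsOpen U)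
    (hρ : Measurable ρ) (hpos : ∀ x ∈ U, ρ x ≠ 0) {f g : X → Y} (hf : ContinuousOn f U)
    (hg : ContinuousOn g U) (hfg : f =ᵐ[ν.withDensity ρ] g) : EqOn f g U := by
  refine ν.eqOn_open_of_ae_eq ?_ hU hf hg
  rw [EventuallyEq, ae_restrict_iff' hU.measurableSet]
  filter_upwards [(ae_withDensity_iff hρ).1 hfg] with x hx hxU using hx (hpos x hxU)

lemma variance_withDensity_pos [TopologicalSpace X] [OpensMeasurableSpace X]
    [ν.IsOpenPosMeasure] [IsProbabilityMeasure (ν.withDensity ρ)] {U : Set X} (hU : IsOpen U)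
    (hρ : Measurable ρ) (hpos : ∀ x ∈ U, ρ x ≠ 0) {f : X → ℝ} (hf : ContinuousOn f U)
    (hf2 : MemLp f 2 (ν.withDensity ρ)) (hnc : ∃ x ∈ U, ∃ y ∈ U, f x ≠ f y) :
    0 < variance f (ν.withDensity ρ) := by
  refine (variance_nonneg _ _).lt_of_ne fun hzero => ?_
  have hconst := eqOn_of_ae_eq_withDensity hU hρ hpos hf continuousOn_const
    (ae_eq_integral_of_variance_eq_zero hf2 hzero.symm)
  obtain ⟨x, hx, y, hy, hxy⟩ := hnc
  exact hxy ((hconst hx).trans (hconst hy).symm)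

lemma isNegInvariant_withDensity [AddGroup X] [MeasurableNeg X] [ν.IsNegInvariant]
    (hρ : Measurable ρ) (heven : ∀ x, ρ (-x) = ρ x) : (ν.withDensity ρ).IsNegInvariant := by
  constructor
  ext s hs
  rw [Measure.neg_apply, withDensity_apply _ hs, withDensity_apply _ hs.neg, ← Set.neg_preimage]
  simpa only [heven] using (Measure.measurePreserving_neg ν).setLIntegral_comp_preimage hs hρ

end Density

lemma ContinuousOn.measurable_of_forall_notMem_eq_zero {X : Type*} [TopologicalSpace X]
    [MeasurableSpace X] [OpensMeasurableSpace X] {s : Set X} {f : X → ℝ} (hf : ContinuousOn f s)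
    (hs : MeasurableSet s) (h0 : ∀ x ∉ s, f x = 0) : Measurable f := by
  classical
  have : f = s.piecewise f 0 := by
    ext x
    by_cases hx : x ∈ s <;> simp [hx, h0]
  rw [this]
  exact hf.measurable_piecewise continuousOn_const hs

lemma ContinuousOn.aestronglyMeasurable_of_ae_mem {X : Type*} [TopologicalSpace X]
    [MeasurableSpace X] [OpensMeasurableSpace X] {μ : Measure X} {s : Set X} {f : X → ℝ}
    (hf : ContinuousOn f s) (hs : MeasurableSet s) (h : ∀ᵐ x ∂μ, x ∈ s) :
    AEStronglyMeasurable f μ := by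
  rw [← Measure.restrict_eq_self_of_ae_mem h]
  exact hf.aestronglyMeasurable hs

theorem stmt6_general (b : ℝ) (ρ : ℝ → ℝ) (μ : Measure ℝ) [IsProbabilityMeasure μ]
    (hμ : μ = MeasureTheory.volume.withDensity fun t => ENNReal.ofReal (ρ t))
    (heven : ∀ x, ρ (-x) = ρ x)
    (hc : ContinuousOn ρ (Set.Ioo (-b) b)) (hpos : ∀ x ∈ Set.Ioo (-b) b, 0 < ρ x)
    (h0 : ∀ x ∉ Set.Ioo (-b) b, ρ x = 0)
    (f f' : ℝ → ℝ)
    (hf : ∀ x ∈ Set.Ioo (-b) b, HasDerivAt f (f' x) x)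
    (hf2 : Integrable (fun x => (f x)^2) μ) (hf'2 : Integrable (fun x => (f' x)^2) μ)
    (hnc : ∃ x ∈ Set.Ioo (-b) b, ∃ y ∈ Set.Ioo (-b) b, f x ≠ f y) :
    ∃ g g' : ℝ → ℝ, (∀ x, g (-x) = - g x) ∧
      (∀ x ∈ Set.Ioo (-b) b, HasDerivAt g (g' x) x) ∧
      Integrable (fun x => (g x)^2) μ ∧ Integrable (fun x => (g' x)^2) μ ∧
      Var μ g ≠ 0 ∧
      (∫ x, (g' x)^2 ∂μ) / Var μ g ≤ (∫ x, (f' x)^2 ∂μ) / Var μ f := by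
  have hρ : Measurable fun t => ENNReal.ofReal (ρ t) :=
    (hc.measurable_of_forall_notMem_eq_zero measurableSet_Ioo h0).ennreal_ofReal
  have hρ_pos : ∀ x ∈ Ioo (-b) b, ENNReal.ofReal (ρ x) ≠ 0 := fun x hx =>
    ENNReal.ofReal_pos.2 (hpos x hx) |>.ne'
  have hae : ∀ᵐ x ∂μ, x ∈ Ioo (-b) b := hμ ▸ ae_mem_withDensity hρ fun x hx => by simp [h0 x hx]
  have : μ.IsNegInvariant := hμ ▸ isNegInvariant_withDensity hρ (by simp [heven])
  have hfc : ContinuousOn f (Ioo (-b) b) := fun x hx => (hf x hx).continuousAt.continuousWithinAt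
  have hf2' : MemLp f 2 μ :=
    (memLp_two_iff_integrable_sq (hfc.aestronglyMeasurable_of_ae_mem measurableSet_Ioo hae)).2 hf2
  have hf'2' : MemLp f' 2 μ :=
    (memLp_two_iff_integrable_sq ((aestronglyMeasurable_deriv f μ).congr
      (hae.mono fun x hx => (hf x hx).deriv))).2 hf'2
  have hvar : 0 < variance f μ := by
    subst hμ
    exact variance_withDensity_pos isOpen_Ioo hρ hρ_pos hfc hf2' hnc
  have hsymm : ∀ x ∈ Ioo (-b) b, -x ∈ Ioo (-b) b := fun x hx => ⟨neg_lt_neg hx.2, neg_lt.1 hx.1⟩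
  obtain ⟨g, g', hg_odd, hg, hg2, hg'2, hvar_g, hle⟩ :=
    exists_odd_div_variance_le hsymm hf hf2' hf'2' hvar
  refine ⟨g, g', hg_odd, hg, hg2.integrable_sq, hg'2.integrable_sq, ?_, ?_⟩
  · rw [Var_eq_variance hg2]; exact hvar_g.ne'
  · rwa [Var_eq_variance hg2, Var_eq_variance hf2']

/-- for an even measure on a symmetric interval, the Rayleigh quotient of any
non-constant `H¹` function is bounded below by that of some odd function. -/
theorem stmt6 (b : ℝ) (hb : 0 < b) (ρ : ℝ → ℝ) (μ : Measure ℝ) [IsProbabilityMeasure μ]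
    (hμ : μ = MeasureTheory.volume.withDensity fun t => ENNReal.ofReal (ρ t))
    (heven : ∀ x, ρ (-x) = ρ x)
    (hc : ContinuousOn ρ (Set.Ioo (-b) b)) (hpos : ∀ x ∈ Set.Ioo (-b) b, 0 < ρ x)
    (h0 : ∀ x ∉ Set.Ioo (-b) b, ρ x = 0)
    (f f' : ℝ → ℝ)
    (hf : ∀ x ∈ Set.Ioo (-b) b, HasDerivAt f (f' x) x)
    (hf2 : Integrable (fun x => (f x)^2) μ) (hf'2 : Integrable (fun x => (f' x)^2) μ)
    (hnc : ∃ x ∈ Set.Ioo (-b) b, ∃ y ∈ Set.Ioo (-b) b, f x ≠ f y) :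
    ∃ g g' : ℝ → ℝ, (∀ x, g (-x) = - g x) ∧
      (∀ x ∈ Set.Ioo (-b) b, HasDerivAt g (g' x) x) ∧
      Integrable (fun x => (g x)^2) μ ∧ Integrable (fun x => (g' x)^2) μ ∧
      Var μ g ≠ 0 ∧
      (∫ x, (g' x)^2 ∂μ) / Var μ g ≤ (∫ x, (f' x)^2 ∂μ) / Var μ f :=
  stmt6_general b ρ μ hμ heven hc hpos h0 f f' hf hf2 hf'2 hnc
end

section
/- Let μ be the double exponential measure dμ(t) = (1/2) e^{−|t|} dt and 0 ≤ a < b. The restriction of μ to [a,b] has optimal Poincaré constant (1/4 + (π/(b−a))²)^{−1}, and the inequality is saturated by f(x) = e^{x/2}(−ω cos(ω(x−a)) + (1/2) sin(ω(x−a))) with ω = π/(b−a). -/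
open MeasureTheory Real Set

/-!
The extremal function `φ = neumannMode a ω` is the first Neumann eigenfunction of
`L = d²/dx² - d/dx` on `[a, b]`: `φ'' - φ' = -κ φ` with `κ = 1/4 + ω²`, and
`φ' = κ e^{x/2} sin (ω (x - a))` vanishes at `a` and `b` and is positive in between, so `φ`
increases through a single zero `c`. Integrating by parts against the eigenvalue equation gives
`∫ e^{-x} φ = 0` and `∫ e^{-x} φ'² = κ ∫ e^{-x} φ²`, so `φ` saturates the constant `κ⁻¹`.

For the inequality, take `G` with `G c = 0` (e.g. `F - F c`). Away from `c` the flux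
`Ψ = (φ'/φ) G² e^{-x}` satisfies
`Ψ' = e^{-x} G'² - κ e^{-x} G² - e^{-x} (G' - (φ'/φ) G)²`,
so `∫_s^t (e^{-x} G'² - κ e^{-x} G²) ≥ Ψ t - Ψ s`. On `[a, c]` and on `[c, b]` the boundary term
at `a`, resp. `b`, has the right sign because `φ' ≥ 0`, and `Ψ → 0` at `c` because `G` and `φ`
both vanish there while `φ' c ≠ 0`. Hence `κ ∫ e^{-x} G² ≤ ∫ e^{-x} G'²`, and
`Var F ≤ ∫ (F - F c)² dμ ≤ κ⁻¹ ∫ F'² dμ`.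
-/

open Filter Topology ProbabilityTheory

theorem Var_le_integral_sq_sub (μ : Measure ℝ) (f : ℝ → ℝ) (c : ℝ) :
    Var μ f ≤ ∫ x, (f x - c) ^ 2 ∂μ :=
  ciInf_le ⟨0, by rintro _ ⟨d, rfl⟩; exact integral_nonneg fun x => sq_nonneg _⟩ c

theorem integral_sq_le_Var {μ : Measure ℝ} [IsProbabilityMeasure μ] {f : ℝ → ℝ}
    (hf : MemLp f 2 μ) (h0 : ∫ x, f x ∂μ = 0) : ∫ x, f x ^ 2 ∂μ ≤ Var μ f := by
  refine le_ciInf fun c => ?_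
  have hf1 : Integrable f μ := hf.integrable one_le_two
  have hf2 : Integrable (fun x => f x ^ 2) μ := hf.integrable_sq
  have hexpand : ∫ x, (f x - c) ^ 2 ∂μ = ∫ x, f x ^ 2 ∂μ + c ^ 2 := by
    have hlin : Integrable (fun x => f x ^ 2 - 2 * c * f x) μ := hf2.sub (hf1.const_mul _)
    simp_rw [show ∀ x, (f x - c) ^ 2 = (f x ^ 2 - 2 * c * f x) + c ^ 2 from fun x => by ring]
    rw [integral_add hlin (integrable_const _), integral_sub hf2 (hf1.const_mul _),
      integral_const_mul, h0]
    simp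
  rw [hexpand]
  exact le_add_of_nonneg_right (sq_nonneg c)

theorem le_of_poincareOn {μ : Measure ℝ} [IsProbabilityMeasure μ] {s : Set ℝ} {C C' : ℝ}
    {f f' : ℝ → ℝ} (hP : PoincareOn μ s C') (hf : ∀ x ∈ s, HasDerivAt f (f' x) x)
    (hf2 : MemLp f 2 μ) (hf'2 : Integrable (fun x => f' x ^ 2) μ) (h0 : ∫ x, f x ∂μ = 0)
    (hsat : ∫ x, f x ^ 2 ∂μ = C * ∫ x, f' x ^ 2 ∂μ) (hpos : 0 < ∫ x, f' x ^ 2 ∂μ) :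
    C ≤ C' :=
  le_of_mul_le_mul_right
    (hsat ▸ (integral_sq_le_Var hf2 h0).trans (hP f f' hf hf2.integrable_sq hf'2)) hpos

theorem intervalIntegral_nonneg_of_forall_Icc {f g k : ℝ → ℝ} {p q : ℝ} (hpq : p < q)
    (hf : IntervalIntegrable f volume p q) (hg : Tendsto g (𝓝[>] p) (𝓝 0))
    (hk : Tendsto k (𝓝[<] q) (𝓝 0))
    (h : ∀ s t, p < s → s ≤ t → t < q → 0 ≤ (∫ x in s..t, f x) + g s + k t) :
    0 ≤ ∫ x in p..q, f x := by
  set F : ℝ → ℝ := fun u => ∫ x in p..u, f x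
  have hF : ContinuousOn F (Icc p q) := by
    simpa only [uIcc_of_le hpq.le] using
      intervalIntegral.continuousOn_primitive_interval' hf left_mem_uIcc
  have hFq : Tendsto F (𝓝[<] q) (𝓝 (F q)) := by
    rw [← nhdsWithin_Ioo_eq_nhdsLT hpq]
    exact (hF q (right_mem_Icc.2 hpq.le)).mono Ioo_subset_Icc_self
  have hFp : Tendsto F (𝓝[>] p) (𝓝 (F p)) := by
    rw [← nhdsWithin_Ioo_eq_nhdsGT hpq]
    exact (hF p (left_mem_Icc.2 hpq.le)).mono Ioo_subset_Icc_self
  have hlim : Tendsto (fun st : ℝ × ℝ => (F st.2 - F st.1) + g st.1 + k st.2)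
      (𝓝[>] p ×ˢ 𝓝[<] q) (𝓝 ((F q - F p) + 0 + 0)) :=
    (((hFq.comp tendsto_snd).sub (hFp.comp tendsto_fst)).add (hg.comp tendsto_fst)).add
      (hk.comp tendsto_snd)
  have hev : ∀ᶠ st : ℝ × ℝ in 𝓝[>] p ×ˢ 𝓝[<] q, 0 ≤ (F st.2 - F st.1) + g st.1 + k st.2 := by
    have hs : ∀ᶠ s in 𝓝[>] p, s ∈ Ioo p ((p + q) / 2) := Ioo_mem_nhdsGT (by linarith)
    have ht : ∀ᶠ t in 𝓝[<] q, t ∈ Ioo ((p + q) / 2) q := Ioo_mem_nhdsLT (by linarith)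
    filter_upwards [hs.prod_mk ht] with ⟨s, t⟩ ⟨⟨hps, hs⟩, ⟨ht, htq⟩⟩
    have hsub : ∀ u ∈ Icc p q, IntervalIntegrable f volume p u := fun u hu =>
      hf.mono_set (by rw [uIcc_of_le hpq.le, uIcc_of_le hu.1]; exact Icc_subset_Icc_right hu.2)
    rw [intervalIntegral.integral_interval_sub_left (hsub t ⟨by linarith, htq.le⟩)
      (hsub s ⟨hps.le, by linarith⟩)]
    exact h s t hps (by linarith) htq
  simpa [F] using ge_of_tendsto hlim hev

section GroundState

variable {φ φ' G G' : ℝ → ℝ} {κ : ℝ}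

noncomputable def groundStateFlux (φ φ' G : ℝ → ℝ) (x : ℝ) : ℝ := φ' x / φ x * G x ^ 2 * exp (-x)

theorem hasDerivAt_groundStateFlux {x g' : ℝ} (hφ : HasDerivAt φ (φ' x) x)
    (hφ' : HasDerivAt φ' (φ' x - κ * φ x) x) (hG : HasDerivAt G g' x) (hx : φ x ≠ 0) :
    HasDerivAt (groundStateFlux φ φ' G) (exp (-x) * g' ^ 2 - κ * (exp (-x) * G x ^ 2)
      - exp (-x) * (g' - φ' x / φ x * G x) ^ 2) x := by
  have h : HasDerivAt (groundStateFlux φ φ' G) _ x :=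
    ((hφ'.div hφ hx).mul (hG.pow 2)).mul (hasDerivAt_neg x).exp
  convert h using 1
  simp only [Pi.div_apply, Pi.mul_apply, Pi.pow_apply]
  field_simp
  ring

theorem groundStateFlux_sub_le_integral {s t : ℝ} (hst : s ≤ t)
    (hφ : ∀ x ∈ Icc s t, HasDerivAt φ (φ' x) x)
    (hφ' : ∀ x ∈ Icc s t, HasDerivAt φ' (φ' x - κ * φ x) x)
    (hne : ∀ x ∈ Icc s t, φ x ≠ 0) (hG : ∀ x ∈ Icc s t, HasDerivAt G (G' x) x)
    (hG' : IntegrableOn (fun x => exp (-x) * G' x ^ 2) (Icc s t)) :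
    groundStateFlux φ φ' G t - groundStateFlux φ φ' G s ≤
      ∫ x in s..t, (exp (-x) * G' x ^ 2 - κ * (exp (-x) * G x ^ 2)) := by
  have hΨ : ∀ x ∈ Icc s t, HasDerivAt (groundStateFlux φ φ' G) _ x := fun x hx =>
    hasDerivAt_groundStateFlux (hφ x hx) (hφ' x hx) (hG x hx) (hne x hx)
  have hGc : ContinuousOn G (Icc s t) := fun x hx => (hG x hx).continuousAt.continuousWithinAt
  refine intervalIntegral.sub_le_integral_of_hasDeriv_right_of_le hst
    (fun x hx => (hΨ x hx).continuousAt.continuousWithinAt)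
    (fun x hx => (hΨ x (Ioo_subset_Icc_self hx)).hasDerivWithinAt)
    (hG'.sub ((continuousOn_const.mul ((continuous_exp.comp continuous_neg).continuousOn.mul
      (hGc.pow 2))).integrableOn_compact isCompact_Icc)) fun x _ => ?_
  exact sub_le_self _ (by positivity)

theorem groundStateFlux_nonpos {x : ℝ} (hφ : φ x ≤ 0) (hφ' : 0 ≤ φ' x) :
    groundStateFlux φ φ' G x ≤ 0 :=
  mul_nonpos_of_nonpos_of_nonneg
    (mul_nonpos_of_nonpos_of_nonneg (div_nonpos_of_nonneg_of_nonpos hφ' hφ) (sq_nonneg _))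
    (exp_pos _).le

theorem groundStateFlux_nonneg {x : ℝ} (hφ : 0 ≤ φ x) (hφ' : 0 ≤ φ' x) :
    0 ≤ groundStateFlux φ φ' G x :=
  mul_nonneg (mul_nonneg (div_nonneg hφ' hφ) (sq_nonneg _)) (exp_pos _).le

theorem tendsto_sq_div_nhdsNE {c d e : ℝ} (hφ : HasDerivAt φ d c) (hd : d ≠ 0) (hφc : φ c = 0)
    (hG : HasDerivAt G e c) (hGc : G c = 0) :
    Tendsto (fun x => G x ^ 2 / φ x) (𝓝[≠] c) (𝓝 0) := by
  have hlim := (((hG.continuousAt.tendsto.mono_left nhdsWithin_le_nhds).mul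
    hG.tendsto_slope).div hφ.tendsto_slope hd)
  rw [hGc, zero_mul, zero_div] at hlim
  -- `G x ^ 2 / φ x = G x * slope G c x / slope φ c x` since `G c = φ c = 0`
  refine hlim.congr' (eventually_nhdsWithin_of_forall fun x (hx : x ≠ c) => ?_)
  have hx' : x - c ≠ 0 := sub_ne_zero.2 hx
  simp only [Pi.div_apply, slope_def_field, hGc, hφc, sub_zero]
  rcases eq_or_ne (φ x) 0 with h | h
  · simp [h]
  · field_simp

theorem tendsto_groundStateFlux {c e : ℝ} (hφ : HasDerivAt φ (φ' c) c) (hφ'c : ContinuousAt φ' c)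
    (hd : φ' c ≠ 0) (hφc : φ c = 0) (hG : HasDerivAt G e c) (hGc : G c = 0) :
    Tendsto (groundStateFlux φ φ' G) (𝓝[≠] c) (𝓝 0) := by
  have hlim := ((hφ'c.mul (continuous_exp.comp continuous_neg).continuousAt).tendsto.mono_left
    nhdsWithin_le_nhds).mul (tendsto_sq_div_nhdsNE hφ hd hφc hG hGc)
  rw [mul_zero] at hlim
  refine hlim.congr fun x => ?_
  simp only [groundStateFlux, Pi.mul_apply, Function.comp_apply]
  ring

end GroundState

section GroundStateInequality

variable {φ φ' G G' : ℝ → ℝ} {κ a b c : ℝ} (hc : c ∈ Ioo a b)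
  (hφ : ∀ x ∈ Ioo a b, HasDerivAt φ (φ' x) x)
  (hφ' : ∀ x ∈ Ioo a b, HasDerivAt φ' (φ' x - κ * φ x) x)
  (hpos : ∀ x ∈ Ioo a b, 0 < φ' x) (hmono : StrictMonoOn φ (Ioo a b)) (hφc : φ c = 0)
  (hG : ∀ x ∈ Ioo a b, HasDerivAt G (G' x) x) (hGc : G c = 0)
  (hG2 : IntervalIntegrable (fun x => exp (-x) * G x ^ 2) volume a b)
  (hG'2 : IntervalIntegrable (fun x => exp (-x) * G' x ^ 2) volume a b)

include hc hφ hφ' hmono hφc hG hG'2 in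
theorem groundStateFlux_sub_le_integral_of_notMem {s t : ℝ} (has : a < s) (hst : s ≤ t)
    (htb : t < b) (hcst : c ∉ Icc s t) :
    groundStateFlux φ φ' G t - groundStateFlux φ φ' G s ≤
      ∫ x in s..t, (exp (-x) * G' x ^ 2 - κ * (exp (-x) * G x ^ 2)) := by
  have hsub : Icc s t ⊆ Ioo a b := Icc_subset_Ioo has htb
  refine groundStateFlux_sub_le_integral hst (fun x hx => hφ x (hsub hx))
    (fun x hx => hφ' x (hsub hx)) (fun x hx => ?_) (fun x hx => hG x (hsub hx))
    (((intervalIntegrable_iff_integrableOn_Icc_of_le (hc.1.trans hc.2).le).1 hG'2).mono_set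
      (Icc_subset_Icc has.le htb.le))
  rw [← hφc]
  rcases lt_or_gt_of_ne (fun h : x = c => hcst (h ▸ hx)) with h | h
  · exact (hmono (hsub hx) hc h).ne
  · exact (hmono hc (hsub hx) h).ne'

include hc hφ hφ' hpos hmono hφc hG hGc hG2 hG'2 in
theorem integral_groundState_nonneg_left :
    0 ≤ ∫ x in a..c, (exp (-x) * G' x ^ 2 - κ * (exp (-x) * G x ^ 2)) := by
  have hcI : c ∈ uIcc a b := Icc_subset_uIcc (Ioo_subset_Icc_self hc)
  refine intervalIntegral_nonneg_of_forall_Icc hc.1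
    ((hG'2.sub (hG2.const_mul κ)).mono_set (uIcc_subset_uIcc left_mem_uIcc hcI))
    tendsto_const_nhds
    (by simpa using ((tendsto_groundStateFlux (hφ c hc) (hφ' c hc).continuousAt
      (hpos c hc).ne' hφc (hG c hc) hGc).mono_left (nhdsLT_le_nhdsNE c)).neg)
    fun s t has hst htc => ?_
  have hs : s ∈ Ioo a b := ⟨has, by linarith [hc.2]⟩
  have hΨs : groundStateFlux φ φ' G s ≤ 0 :=
    groundStateFlux_nonpos (hφc ▸ hmono hs hc (hst.trans_lt htc)).le (hpos s hs).le
  have := groundStateFlux_sub_le_integral_of_notMem hc hφ hφ' hmono hφc hG hG'2 has hst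
    (htc.trans hc.2) fun h => (h.2.trans_lt htc).false
  linarith

include hc hφ hφ' hpos hmono hφc hG hGc hG2 hG'2 in
theorem integral_groundState_nonneg_right :
    0 ≤ ∫ x in c..b, (exp (-x) * G' x ^ 2 - κ * (exp (-x) * G x ^ 2)) := by
  have hcI : c ∈ uIcc a b := Icc_subset_uIcc (Ioo_subset_Icc_self hc)
  refine intervalIntegral_nonneg_of_forall_Icc hc.2
    ((hG'2.sub (hG2.const_mul κ)).mono_set (uIcc_subset_uIcc hcI right_mem_uIcc))
    ((tendsto_groundStateFlux (hφ c hc) (hφ' c hc).continuousAt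
      (hpos c hc).ne' hφc (hG c hc) hGc).mono_left (nhdsGT_le_nhdsNE c))
    tendsto_const_nhds fun s t hcs hst htb => ?_
  have ht : t ∈ Ioo a b := ⟨by linarith [hc.1], htb⟩
  have hΨt : 0 ≤ groundStateFlux φ φ' G t :=
    groundStateFlux_nonneg (hφc ▸ hmono hc ht (hcs.trans_le hst)).le (hpos t ht).le
  have := groundStateFlux_sub_le_integral_of_notMem hc hφ hφ' hmono hφc hG hG'2
    (hc.1.trans hcs) hst htb fun h => (hcs.trans_le h.1).false
  linarith

include hc hφ hφ' hpos hφc hG hGc hG2 hG'2 in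
theorem weighted_poincare_of_groundState :
    κ * ∫ x in a..b, exp (-x) * G x ^ 2 ≤ ∫ x in a..b, exp (-x) * G' x ^ 2 := by
  have hmono : StrictMonoOn φ (Ioo a b) :=
    strictMonoOn_of_deriv_pos (convex_Ioo a b)
      (fun x hx => (hφ x hx).continuousAt.continuousWithinAt)
      (fun x hx => by rw [interior_Ioo] at hx; rw [(hφ x hx).deriv]; exact hpos x hx)
  have hcI : c ∈ uIcc a b := Icc_subset_uIcc (Ioo_subset_Icc_self hc)
  have hf := hG'2.sub (hG2.const_mul κ)
  have hsplit := intervalIntegral.integral_add_adjacent_intervals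
    (hf.mono_set (uIcc_subset_uIcc left_mem_uIcc hcI))
    (hf.mono_set (uIcc_subset_uIcc hcI right_mem_uIcc))
  rw [intervalIntegral.integral_sub hG'2 (hG2.const_mul κ),
    intervalIntegral.integral_const_mul] at hsplit
  linarith [integral_groundState_nonneg_left hc hφ hφ' hpos hmono hφc hG hGc hG2 hG'2,
    integral_groundState_nonneg_right hc hφ hφ' hpos hmono hφc hG hGc hG2 hG'2]

end GroundStateInequality

section NeumannIdentities

variable {φ φ' : ℝ → ℝ} {κ a b : ℝ}

theorem integral_exp_neg_mul_eq_zero_of_neumann (hκ : κ ≠ 0)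
    (hφ : ∀ x ∈ uIcc a b, HasDerivAt φ (φ' x) x)
    (hφ' : ∀ x ∈ uIcc a b, HasDerivAt φ' (φ' x - κ * φ x) x) (ha : φ' a = 0) (hb : φ' b = 0) :
    ∫ x in a..b, exp (-x) * φ x = 0 := by
  have hφc : ContinuousOn φ (uIcc a b) := fun x hx => (hφ x hx).continuousAt.continuousWithinAt
  have hFTC := intervalIntegral.integral_eq_sub_of_hasDerivAt (f := fun x => exp (-x) * φ' x)
    (fun x hx => ((hasDerivAt_neg x).exp.mul (hφ' x hx)).congr_deriv (by ring :
      _ = -κ * (exp (-x) * φ x)))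
    ((continuous_exp.comp continuous_neg).continuousOn.mul hφc |>.const_smul (-κ)
      |>.intervalIntegrable)
  simp only [intervalIntegral.integral_const_mul, ha, hb, mul_zero, sub_zero] at hFTC
  exact (mul_eq_zero.1 hFTC).resolve_left (neg_ne_zero.2 hκ)

theorem integral_exp_neg_mul_deriv_sq_of_neumann
    (hφ : ∀ x ∈ uIcc a b, HasDerivAt φ (φ' x) x)
    (hφ' : ∀ x ∈ uIcc a b, HasDerivAt φ' (φ' x - κ * φ x) x) (ha : φ' a = 0) (hb : φ' b = 0) :
    ∫ x in a..b, exp (-x) * φ' x ^ 2 = κ * ∫ x in a..b, exp (-x) * φ x ^ 2 := by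
  have hφc : ContinuousOn φ (uIcc a b) := fun x hx => (hφ x hx).continuousAt.continuousWithinAt
  have hφ'c : ContinuousOn φ' (uIcc a b) := fun x hx =>
    (hφ' x hx).continuousAt.continuousWithinAt
  have hexp : ContinuousOn (fun x => exp (-x)) (uIcc a b) :=
    (continuous_exp.comp continuous_neg).continuousOn
  have hi1 : IntervalIntegrable (fun x => exp (-x) * φ' x ^ 2) volume a b :=
    (hexp.mul (hφ'c.pow 2)).intervalIntegrable
  have hi2 : IntervalIntegrable (fun x => κ * (exp (-x) * φ x ^ 2)) volume a b :=
    ((hexp.mul (hφc.pow 2)).const_smul κ).intervalIntegrable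
  have hFTC := intervalIntegral.integral_eq_sub_of_hasDerivAt
    (f := fun x => φ x * (exp (-x) * φ' x))
    (fun x hx => ((hφ x hx).mul ((hasDerivAt_neg x).exp.mul (hφ' x hx))).congr_deriv
      (by simp only [Pi.mul_apply]; ring : _ = exp (-x) * φ' x ^ 2 - κ * (exp (-x) * φ x ^ 2)))
    (hi1.sub hi2)
  rw [intervalIntegral.integral_sub hi1 hi2, intervalIntegral.integral_const_mul] at hFTC
  simp only [ha, hb, mul_zero, sub_zero] at hFTC
  linarith

end NeumannIdentities

noncomputable def neumannMode (a ω x : ℝ) : ℝ :=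
  exp (x / 2) * (-ω * cos (ω * (x - a)) + (1 / 2) * sin (ω * (x - a)))

noncomputable def neumannModeDeriv (a ω x : ℝ) : ℝ :=
  (1 / 4 + ω ^ 2) * exp (x / 2) * sin (ω * (x - a))

section NeumannMode

variable {a b ω : ℝ}

theorem hasDerivAt_neumannMode (x : ℝ) :
    HasDerivAt (neumannMode a ω) (neumannModeDeriv a ω x) x := by
  have hθ : HasDerivAt (fun y => ω * (y - a)) ω x := by
    simpa using ((hasDerivAt_id x).sub_const a).const_mul ω
  have h : HasDerivAt (neumannMode a ω) _ x := ((hasDerivAt_id x).div_const 2).exp.mul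
    ((hθ.cos.const_mul (-ω)).add (hθ.sin.const_mul (1 / 2)))
  refine h.congr_deriv ?_
  simp only [neumannModeDeriv, id]
  ring

theorem hasDerivAt_neumannModeDeriv (x : ℝ) :
    HasDerivAt (neumannModeDeriv a ω)
      (neumannModeDeriv a ω x - (1 / 4 + ω ^ 2) * neumannMode a ω x) x := by
  have hθ : HasDerivAt (fun y => ω * (y - a)) ω x := by
    simpa using ((hasDerivAt_id x).sub_const a).const_mul ω
  have h : HasDerivAt (neumannModeDeriv a ω) _ x :=
    ((((hasDerivAt_id x).div_const 2).exp).const_mul (1 / 4 + ω ^ 2)).mul hθ.sin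
  refine h.congr_deriv ?_
  simp only [neumannModeDeriv, neumannMode, id]
  ring

theorem deriv_neumannMode : deriv (neumannMode a ω) = neumannModeDeriv a ω :=
  funext fun x => (hasDerivAt_neumannMode x).deriv

theorem continuous_neumannMode : Continuous (neumannMode a ω) :=
  continuous_iff_continuousAt.2 fun x => (hasDerivAt_neumannMode x).continuousAt

theorem continuous_neumannModeDeriv : Continuous (neumannModeDeriv a ω) :=
  continuous_iff_continuousAt.2 fun x => (hasDerivAt_neumannModeDeriv x).continuousAt

theorem neumannModeDeriv_left : neumannModeDeriv a ω a = 0 := by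
  simp [neumannModeDeriv]

theorem neumannModeDeriv_right (hab : a ≠ b) : neumannModeDeriv a (π / (b - a)) b = 0 := by
  simp [neumannModeDeriv, div_mul_cancel₀ _ (sub_ne_zero.2 hab.symm)]

theorem neumannModeDeriv_pos (hab : a < b) {x : ℝ} (hx : x ∈ Ioo a b) :
    0 < neumannModeDeriv a (π / (b - a)) x := by
  have hba : 0 < b - a := sub_pos.2 hab
  have hsin : 0 < sin (π / (b - a) * (x - a)) := by
    refine sin_pos_of_pos_of_lt_pi (by have := sub_pos.2 hx.1; positivity) ?_
    rw [div_mul_eq_mul_div, div_lt_iff₀ hba]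
    nlinarith [pi_pos, hx.2]
  unfold neumannModeDeriv
  positivity

theorem exists_neumannMode_eq_zero (hab : a < b) :
    ∃ c ∈ Ioo a b, neumannMode a (π / (b - a)) c = 0 := by
  have hω : 0 < π / (b - a) := div_pos pi_pos (sub_pos.2 hab)
  have hθ : π / (b - a) * (b - a) = π := div_mul_cancel₀ _ (sub_ne_zero.2 hab.ne')
  refine intermediate_value_Ioo hab.le continuous_neumannMode.continuousOn ⟨?_, ?_⟩
  · simp only [neumannMode, sub_self, mul_zero, cos_zero, sin_zero]
    nlinarith [exp_pos (a / 2)]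
  · simp only [neumannMode, hθ, cos_pi, sin_pi]
    nlinarith [exp_pos (b / 2)]

theorem integral_exp_neg_mul_neumannMode (hab : a ≠ b) :
    ∫ x in a..b, exp (-x) * neumannMode a (π / (b - a)) x = 0 :=
  integral_exp_neg_mul_eq_zero_of_neumann (by positivity) (fun x _ => hasDerivAt_neumannMode x)
    (fun x _ => hasDerivAt_neumannModeDeriv x) neumannModeDeriv_left (neumannModeDeriv_right hab)

theorem integral_exp_neg_mul_neumannModeDeriv_sq (hab : a ≠ b) :
    ∫ x in a..b, exp (-x) * neumannModeDeriv a (π / (b - a)) x ^ 2 =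
      (1 / 4 + (π / (b - a)) ^ 2) * ∫ x in a..b, exp (-x) * neumannMode a (π / (b - a)) x ^ 2 :=
  integral_exp_neg_mul_deriv_sq_of_neumann (fun x _ => hasDerivAt_neumannMode x)
    (fun x _ => hasDerivAt_neumannModeDeriv x) neumannModeDeriv_left (neumannModeDeriv_right hab)

end NeumannMode

noncomputable def doubleExpMeasure : Measure ℝ :=
  volume.withDensity fun t => ENNReal.ofReal ((1 / 2) * exp (-|t|))

noncomputable def truncatedExpMeasure (a b : ℝ) : Measure ℝ :=
  (volume.restrict (Ioo a b)).withDensity fun x =>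
    ENNReal.ofReal (exp (-x) / (exp (-a) - exp (-b)))

section TruncatedExpMeasure

variable {a b : ℝ}

theorem exp_neg_sub_exp_neg_pos (hab : a < b) : 0 < exp (-a) - exp (-b) :=
  sub_pos.2 (exp_lt_exp.2 (neg_lt_neg hab))

theorem integral_exp_neg : ∫ x in a..b, exp (-x) = exp (-a) - exp (-b) := by
  rw [intervalIntegral.integral_comp_neg (fun x => exp x), integral_exp]

theorem integral_truncatedExpMeasure (hab : a ≤ b) (g : ℝ → ℝ) :
    ∫ x, g x ∂truncatedExpMeasure a b = (∫ x in a..b, exp (-x) * g x) / (exp (-a) - exp (-b)) := by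
  have hZ : 0 ≤ exp (-a) - exp (-b) := sub_nonneg.2 (exp_le_exp.2 (neg_le_neg hab))
  rw [truncatedExpMeasure, integral_withDensity_eq_integral_toReal_smul (by fun_prop)
    (ae_of_all _ fun _ => ENNReal.ofReal_lt_top), intervalIntegral.integral_of_le hab,
    integral_Ioc_eq_integral_Ioo, ← integral_div]
  refine integral_congr_ae (ae_of_all _ fun x => ?_)
  simp only [smul_eq_mul, ENNReal.toReal_ofReal (div_nonneg (exp_pos _).le hZ)]
  ring

theorem integrable_truncatedExpMeasure_iff (hab : a < b) {g : ℝ → ℝ} :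
    Integrable g (truncatedExpMeasure a b) ↔
      IntervalIntegrable (fun x => exp (-x) * g x) volume a b := by
  have hZ := exp_neg_sub_exp_neg_pos hab
  rw [truncatedExpMeasure, integrable_withDensity_iff (by fun_prop)
    (ae_of_all _ fun _ => ENNReal.ofReal_lt_top),
    intervalIntegrable_iff_integrableOn_Ioo_of_le hab.le, IntegrableOn,
    ← integrable_const_mul_iff (isUnit_iff_ne_zero.2 hZ.ne')]
  refine integrable_congr (ae_of_all _ fun x => ?_)
  simp only [ENNReal.toReal_ofReal (div_nonneg (exp_pos _).le hZ.le)]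
  field_simp

theorem isProbabilityMeasure_truncatedExpMeasure (hab : a < b) :
    IsProbabilityMeasure (truncatedExpMeasure a b) := by
  have hZ := exp_neg_sub_exp_neg_pos hab
  have hint : IntegrableOn (fun x => exp (-x) / (exp (-a) - exp (-b))) (Ioo a b) :=
    (Continuous.integrableOn_Icc (by fun_prop)).mono_set Ioo_subset_Icc_self
  constructor
  rw [truncatedExpMeasure, withDensity_apply _ MeasurableSet.univ, Measure.restrict_univ,
    ← ofReal_integral_eq_lintegral_ofReal hint (ae_of_all _ fun x => by positivity),
    integral_div, ← integral_Ioc_eq_integral_Ioo, ← intervalIntegral.integral_of_le hab.le,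
    integral_exp_neg, div_self hZ.ne', ENNReal.ofReal_one]

theorem memLp_two_truncatedExpMeasure {g : ℝ → ℝ} (hg : ContinuousOn g (Ioo a b))
    (hg2 : Integrable (fun x => g x ^ 2) (truncatedExpMeasure a b)) :
    MemLp g 2 (truncatedExpMeasure a b) :=
  (memLp_two_iff_integrable_sq ((hg.aestronglyMeasurable measurableSet_Ioo).mono_ac
    (withDensity_absolutelyContinuous _ _))).2 hg2

theorem doubleExpMeasure_restrict_Icc (ha : 0 ≤ a) :
    doubleExpMeasure.restrict (Icc a b) =
      ENNReal.ofReal ((exp (-a) - exp (-b)) / 2) • truncatedExpMeasure a b := by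
  rw [doubleExpMeasure, restrict_withDensity measurableSet_Icc,
    Measure.restrict_congr_set Ioo_ae_eq_Icc.symm, truncatedExpMeasure,
    ← withDensity_smul' _ _ ENNReal.ofReal_ne_top]
  refine withDensity_congr_ae (ae_restrict_of_forall_mem measurableSet_Ioo fun x hx => ?_)
  have hZ := exp_neg_sub_exp_neg_pos (hx.1.trans hx.2)
  rw [Pi.smul_apply, smul_eq_mul, ← ENNReal.ofReal_mul (by positivity)]
  beta_reduce
  rw [abs_of_nonneg (ha.trans hx.1.le)]
  congr 1
  field_simp

theorem cond_doubleExpMeasure_Icc (ha : 0 ≤ a) (hab : a < b) :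
    doubleExpMeasure[|Icc a b] = truncatedExpMeasure a b := by
  have hZ := exp_neg_sub_exp_neg_pos hab
  have hr := doubleExpMeasure_restrict_Icc (b := b) ha
  have := isProbabilityMeasure_truncatedExpMeasure hab
  have hmass : doubleExpMeasure (Icc a b) = ENNReal.ofReal ((exp (-a) - exp (-b)) / 2) := by
    rw [← Measure.restrict_apply_univ, hr, Measure.smul_apply, measure_univ, smul_eq_mul,
      mul_one]
  rw [ProbabilityTheory.cond, hr, hmass, smul_smul, ENNReal.inv_mul_cancel
    (ENNReal.ofReal_pos.2 (by positivity)).ne' ENNReal.ofReal_ne_top, one_smul]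

end TruncatedExpMeasure

section TruncatedExpPoincare

variable {a b : ℝ}

theorem integrable_truncatedExpMeasure_of_continuous (hab : a < b) {g : ℝ → ℝ}
    (hg : Continuous g) : Integrable g (truncatedExpMeasure a b) :=
  (integrable_truncatedExpMeasure_iff hab).2
    ((continuous_exp.comp continuous_neg).mul hg |>.intervalIntegrable _ _)

theorem poincareOn_truncatedExpMeasure (hab : a < b) :
    PoincareOn (truncatedExpMeasure a b) (Ioo a b) (1 / 4 + (π / (b - a)) ^ 2)⁻¹ := by
  intro F F' hF hF2 hF'2
  have := isProbabilityMeasure_truncatedExpMeasure hab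
  obtain ⟨c, hc, hφc⟩ := exists_neumannMode_eq_zero hab
  have hκ : 0 < 1 / 4 + (π / (b - a)) ^ 2 := by positivity
  have hZ := exp_neg_sub_exp_neg_pos hab
  have hFc : ContinuousOn F (Ioo a b) := fun x hx => (hF x hx).continuousAt.continuousWithinAt
  have hG2 : Integrable (fun x => (F x - F c) ^ 2) (truncatedExpMeasure a b) :=
    ((memLp_two_truncatedExpMeasure hFc hF2).sub (memLp_const _)).integrable_sq
  have key := weighted_poincare_of_groundState hc (fun x _ => hasDerivAt_neumannMode x)
    (fun x _ => hasDerivAt_neumannModeDeriv x) (fun x hx => neumannModeDeriv_pos hab hx) hφc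
    (fun x hx => (hF x hx).sub_const (F c)) (sub_self _)
    ((integrable_truncatedExpMeasure_iff hab).1 hG2)
    ((integrable_truncatedExpMeasure_iff hab).1 hF'2)
  calc Var (truncatedExpMeasure a b) F ≤ ∫ x, (F x - F c) ^ 2 ∂truncatedExpMeasure a b :=
        Var_le_integral_sq_sub _ _ _
    _ = (∫ x in a..b, exp (-x) * (F x - F c) ^ 2) / (exp (-a) - exp (-b)) :=
        integral_truncatedExpMeasure hab.le _
    _ ≤ ((1 / 4 + (π / (b - a)) ^ 2)⁻¹ * ∫ x in a..b, exp (-x) * F' x ^ 2) /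
          (exp (-a) - exp (-b)) := by
        gcongr
        rwa [le_inv_mul_iff₀ hκ]
    _ = (1 / 4 + (π / (b - a)) ^ 2)⁻¹ * ∫ x, F' x ^ 2 ∂truncatedExpMeasure a b := by
        rw [integral_truncatedExpMeasure hab.le, mul_div_assoc]

theorem integral_neumannMode_truncatedExpMeasure (hab : a < b) :
    ∫ x, neumannMode a (π / (b - a)) x ∂truncatedExpMeasure a b = 0 := by
  rw [integral_truncatedExpMeasure hab.le, integral_exp_neg_mul_neumannMode hab.ne, zero_div]

theorem integral_neumannMode_sq_truncatedExpMeasure (hab : a < b) :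
    ∫ x, neumannMode a (π / (b - a)) x ^ 2 ∂truncatedExpMeasure a b =
      (1 / 4 + (π / (b - a)) ^ 2)⁻¹ *
        ∫ x, neumannModeDeriv a (π / (b - a)) x ^ 2 ∂truncatedExpMeasure a b := by
  rw [integral_truncatedExpMeasure hab.le, integral_truncatedExpMeasure hab.le,
    integral_exp_neg_mul_neumannModeDeriv_sq hab.ne, ← mul_div_assoc,
    inv_mul_cancel_left₀ (by positivity)]

theorem le_of_poincareOn_truncatedExpMeasure (hab : a < b) {C : ℝ}
    (hP : PoincareOn (truncatedExpMeasure a b) (Ioo a b) C) :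
    (1 / 4 + (π / (b - a)) ^ 2)⁻¹ ≤ C := by
  have := isProbabilityMeasure_truncatedExpMeasure hab
  have hZ := exp_neg_sub_exp_neg_pos hab
  refine le_of_poincareOn hP (fun x _ => hasDerivAt_neumannMode x)
    (memLp_two_truncatedExpMeasure continuous_neumannMode.continuousOn
      (integrable_truncatedExpMeasure_of_continuous hab (continuous_neumannMode.pow 2)))
    (integrable_truncatedExpMeasure_of_continuous hab (continuous_neumannModeDeriv.pow 2))
    (integral_neumannMode_truncatedExpMeasure hab)
    (integral_neumannMode_sq_truncatedExpMeasure hab) ?_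
  rw [integral_truncatedExpMeasure hab.le]
  refine div_pos (intervalIntegral.intervalIntegral_pos_of_pos_on ?_
    (fun x hx => mul_pos (exp_pos _) (pow_pos (neumannModeDeriv_pos hab hx) 2)) hab) hZ
  exact ((continuous_exp.comp continuous_neg).mul
    (continuous_neumannModeDeriv.pow 2)).intervalIntegrable _ _

end TruncatedExpPoincare

/-- the double exponential measure restricted to `[a,b]` with `0 ≤ a < b`
has optimal Poincaré constant `(1/4 + (π/(b-a))²)⁻¹`, with the stated saturating function. -/
theorem stmt11 (a b : ℝ) (ha : 0 ≤ a) (hab : a < b) (ν μ : Measure ℝ)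
    (hν : ν = MeasureTheory.volume.withDensity fun t =>
      ENNReal.ofReal ((1/2) * Real.exp (-|t|)))
    (hμ : μ = (ν (Set.Icc a b))⁻¹ • ν.restrict (Set.Icc a b))
    (ω C : ℝ) (hω : ω = Real.pi / (b - a)) (hC : C = (1/4 + ω^2)⁻¹)
    (f : ℝ → ℝ)
    (hf : ∀ x, f x = Real.exp (x/2) *
      (-ω * Real.cos (ω * (x - a)) + (1/2) * Real.sin (ω * (x - a)))) :
    PoincareOn μ (Set.Ioo a b) C ∧
    (∀ C', 0 ≤ C' → PoincareOn μ (Set.Ioo a b) C' → C ≤ C') ∧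
    (∫ x, f x ∂μ = 0) ∧
    (∫ x, (f x)^2 ∂μ = C * ∫ x, (deriv f x)^2 ∂μ) := by
  subst hν hω hC
  obtain rfl : μ = truncatedExpMeasure a b := hμ.trans (cond_doubleExpMeasure_Icc ha hab)
  obtain rfl : f = neumannMode a (π / (b - a)) := funext hf
  rw [deriv_neumannMode]
  exact ⟨poincareOn_truncatedExpMeasure hab,
    fun _ _ => le_of_poincareOn_truncatedExpMeasure hab,
    integral_neumannMode_truncatedExpMeasure hab, integral_neumannMode_sq_truncatedExpMeasure hab⟩
end

section
/- Let V be continuous and piecewise C¹ on a bounded interval [a,b], ρ = e^{−V}, and suppose f_λ, g_λ form a basis of solutions of the equation u'' − V'u' = −λu. Then the Neumann spectral gap of the measure ρ(t)dt/Z on [a,b] is the first positive zero of the function d(λ) = f_λ'(a)·g_λ'(b) − f_λ'(b)·g_λ'(a). Moreover, if V is even and a = −b, the spectral gap is the first positive zero of λ ↦ g_λ'(b), where g_λ is the odd solution. -/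
open MeasureTheory Real Set

/-- `(u, u')` solves `u'' - V'u' = -λu` on `[a,b]`. -/
def IsSol (V' : ℝ → ℝ) (a b lam : ℝ) (u u' : ℝ → ℝ) : Prop :=
  (∀ t ∈ Set.Icc a b, HasDerivAt u (u' t) t) ∧
  (∀ t ∈ Set.Icc a b, HasDerivAt u' (V' t * u' t - lam * u t) t)

/-- `lam` is a Neumann eigenvalue of `f'' - V'f' = -λf` on `[a,b]`. -/
def IsNeumannEig (V' : ℝ → ℝ) (a b lam : ℝ) : Prop :=
  ∃ u u' : ℝ → ℝ, IsSol V' a b lam u u' ∧ (∃ x ∈ Set.Icc a b, u x ≠ 0) ∧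
    u' a = 0 ∧ u' b = 0

open Filter Topology

/-!
Written as `(e^{-V} u')' = -λ e^{-V} u`, the equation is a linear first-order system for the
phase `(u, e^{-V} u')` with bounded coefficients. Grönwall's inequality therefore gives uniqueness
for the initial value problem, even from an endpoint, and Lipschitz dependence on `λ`. By
uniqueness the Neumann problem is the `2 × 2` linear system for the coefficients of `u` in the
basis `f_λ, g_λ`, whose determinant is `d(λ)`.

In the symmetric case reflection preserves solutions. An eigenfunction that is not even has a
nonzero odd part, which is proportional to `g_λ`, so `g_λ'(b) = 0`. For an even eigenfunction `u`
with eigenvalue `λ`, Sturm comparison (the Wronskian with the odd solution, taken at the last zero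
of `u`) shows that the momentum of `g_λ` becomes `≤ 0` on `[0, b]`. It is positive for `λ = 0` and
depends continuously on `λ`, so for some `μ ≤ λ` it first touches zero. At an interior touching
point the momentum has a minimum, forcing `g_μ` to vanish to second order. So the touching point
is `b`, i.e. `g_μ'(b) = 0`.
-/

lemma gronwallBound_le_add_mul_exp {δ K ε x : ℝ} (hK : 0 ≤ K) (hε : 0 ≤ ε) :
    gronwallBound δ K ε x ≤ (δ + ε * x) * exp (K * x) := by
  rcases hK.eq_or_lt with rfl | hK
  · simp [gronwallBound_K0]
  have key : exp (K * x) - 1 ≤ K * x * exp (K * x) := by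
    nlinarith [add_one_le_exp (-(K * x)), exp_pos (K * x), exp_neg (K * x),
      mul_inv_cancel₀ (exp_pos (K * x)).ne']
  have hεK : ε / K * (exp (K * x) - 1) ≤ ε * x * exp (K * x) := by
    rw [div_mul_eq_mul_div, div_le_iff₀ hK]
    nlinarith [mul_le_mul_of_nonneg_left key hε]
  simp only [gronwallBound_of_K_ne_0 hK.ne']
  linarith

lemma eq_of_hasDerivAt_zero {f : ℝ → ℝ} {a b : ℝ} (hf : ContinuousOn f (Icc a b))
    (hf' : ∀ t ∈ Ioo a b, HasDerivAt f 0 t) : ∀ t ∈ Icc a b, f t = f a := by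
  intro t ht
  rcases ht.1.eq_or_lt with rfl | hat
  · rfl
  obtain ⟨c, -, hc⟩ := exists_hasDerivAt_eq_slope f (fun _ => 0) hat
    (hf.mono (Icc_subset_Icc_right ht.2)) fun x hx => hf' x ⟨hx.1, hx.2.trans_le ht.2⟩
  rw [eq_comm, div_eq_zero_iff, sub_eq_zero] at hc
  exact hc.resolve_right (sub_ne_zero.2 hat.ne')

lemma mul_pos_of_forall_ne_zero {f : ℝ → ℝ} {x y : ℝ} (hxy : x ≤ y)
    (hf : ContinuousOn f (Icc x y)) (h0 : ∀ t ∈ Icc x y, f t ≠ 0) : 0 < f x * f y := by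
  by_contra! h
  have hmem : (0 : ℝ) ∈ uIcc (f x) (f y) := by
    rcases mul_nonpos_iff.1 h with h | h
    exacts [mem_uIcc.2 (Or.inr ⟨h.2, h.1⟩), mem_uIcc.2 (Or.inl h)]
  rw [← uIcc_of_le hxy] at hf h0
  obtain ⟨c, hc, hfc⟩ := intermediate_value_uIcc hf hmem
  exact h0 c hc hfc

lemma exists_zero_deriv_mul_nonneg {u u' : ℝ → ℝ} {c b : ℝ} (hcb : c ≤ b)
    (hu : ∀ t ∈ Icc c b, HasDerivAt u (u' t) t) (hc : u c = 0) (hb : u b ≠ 0) :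
    ∃ s ∈ Icc c b, u s = 0 ∧ 0 ≤ u' s * u b := by
  have hcont : ContinuousOn u (Icc c b) := fun t ht => (hu t ht).continuousAt.continuousWithinAt
  have hZ : IsCompact (Icc c b ∩ u ⁻¹' {0}) :=
    isCompact_Icc.of_isClosed_subset (hcont.preimage_isClosed_of_isClosed isClosed_Icc
      isClosed_singleton) inter_subset_left
  obtain ⟨s, ⟨hs, hus⟩, hmax⟩ := hZ.exists_isGreatest ⟨c, ⟨le_rfl, hcb⟩, hc⟩
  have hsb : s < b := hs.2.lt_of_ne fun h => hb (h ▸ hus)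
  have hsign : ∀ t ∈ Ioo s b, 0 < u t * u b := fun t ht =>
    mul_pos_of_forall_ne_zero ht.2.le (hcont.mono (Icc_subset_Icc (hs.1.trans ht.1.le) le_rfl))
      fun x hx hux => (hmax ⟨⟨hs.1.trans (ht.1.le.trans hx.1), hx.2⟩, hux⟩).not_gt
        (ht.1.trans_le hx.1)
  refine ⟨s, hs, hus, ?_⟩
  have hslope : Tendsto (fun t => slope u s t * u b) (𝓝[>] s) (𝓝 (u' s * u b)) :=
    (((hasDerivAt_iff_tendsto_slope.1 (hu s hs)).mono_left (nhdsGT_le_nhdsNE s)).mul_const _)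
  refine ge_of_tendsto hslope ?_
  filter_upwards [Ioo_mem_nhdsGT hsb] with t ht
  rw [slope_def_field, hus, sub_zero, div_mul_eq_mul_div]
  exact div_nonneg (hsign t ht).le (sub_nonneg.2 ht.1.le)

lemma exists_pos_forall_nonneg_exists_eq_zero {m : ℝ → ℝ → ℝ} {s : Set ℝ} {α β C : ℝ}
    (hs : IsCompact s) (hsne : s.Nonempty) (hαβ : α ≤ β)
    (hm : ∀ μ ∈ Icc α β, ContinuousOn (m μ) s)
    (hlip : ∀ μ₁ ∈ Icc α β, ∀ μ₂ ∈ Icc α β, ∀ t ∈ s, |m μ₁ t - m μ₂ t| ≤ C * |μ₁ - μ₂|)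
    (hα : ∀ t ∈ s, 0 < m α t) (hβ : ∃ t ∈ s, m β t ≤ 0) :
    ∃ μ ∈ Ioc α β, (∀ t ∈ s, 0 ≤ m μ t) ∧ ∃ t ∈ s, m μ t = 0 := by
  set F := fun μ => sInf (m μ '' s)
  have hmin : ∀ μ ∈ Icc α β, ∃ t ∈ s, IsMinOn (m μ) s t ∧ F μ = m μ t := by
    intro μ hμ
    obtain ⟨t, ht, htmin⟩ := hs.exists_isMinOn hsne (hm μ hμ)
    exact ⟨t, ht, htmin, IsLeast.csInf_eq ⟨mem_image_of_mem _ ht, by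
      rintro _ ⟨x, hx, rfl⟩; exact htmin hx⟩⟩
  have hF : ∀ μ₁ ∈ Icc α β, ∀ μ₂ ∈ Icc α β, F μ₁ ≤ F μ₂ + C * |μ₁ - μ₂| := by
    intro μ₁ hμ₁ μ₂ hμ₂
    obtain ⟨t₁, -, ht₁, hF₁⟩ := hmin μ₁ hμ₁
    obtain ⟨t₂, ht₂, -, hF₂⟩ := hmin μ₂ hμ₂
    have := (abs_le.1 (hlip μ₁ hμ₁ μ₂ hμ₂ t₂ ht₂)).2
    linarith [isMinOn_iff.1 ht₁ t₂ ht₂]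
  have hFc : ContinuousOn F (Icc α β) := by
    refine (LipschitzOnWith.of_dist_le_mul (K := C.toNNReal) fun μ₁ hμ₁ μ₂ hμ₂ => ?_).continuousOn
    rw [Real.dist_eq, Real.dist_eq, abs_sub_le_iff]
    have h₁ := hF μ₁ hμ₁ μ₂ hμ₂
    have h₂ := hF μ₂ hμ₂ μ₁ hμ₁
    rw [abs_sub_comm] at h₂
    have := mul_le_mul_of_nonneg_right (Real.le_coe_toNNReal C) (abs_nonneg (μ₁ - μ₂))
    constructor <;> linarith
  have hzero : (0 : ℝ) ∈ Icc (F β) (F α) := by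
    obtain ⟨t, ht, hmt⟩ := hβ
    obtain ⟨tβ, -, htβ, hFβ⟩ := hmin β ⟨hαβ, le_rfl⟩
    obtain ⟨tα, htα, -, hFα⟩ := hmin α ⟨le_rfl, hαβ⟩
    exact ⟨hFβ ▸ (htβ ht).trans hmt, hFα ▸ (hα tα htα).le⟩
  obtain ⟨μ, hμ, hFμ⟩ := intermediate_value_Icc' hαβ hFc hzero
  obtain ⟨t, ht, htmin, hFt⟩ := hmin μ hμ
  have hμt : m μ t = 0 := hFt.symm.trans hFμ
  have hμα : α ≠ μ := by
    rintro rfl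
    exact (hα t ht).ne' hμt
  exact ⟨μ, ⟨hμ.1.lt_of_ne hμα, hμ.2⟩, fun x hx => hμt ▸ isMinOn_iff.1 htmin x hx, t, ht, hμt⟩

lemma HasDerivAt.unique_of_eqOn_Icc {u v : ℝ → ℝ} {du dv a b t : ℝ} (hu : HasDerivAt u du t)
    (hv : HasDerivAt v dv t) (hab : a < b) (ht : t ∈ Icc a b) (heq : EqOn u v (Icc a b)) :
    du = dv :=
  (uniqueDiffOn_Icc hab t ht).eq_deriv _ hu.hasDerivWithinAt
    (hv.hasDerivWithinAt.congr heq (heq ht))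

lemma IsSol.linComb {V' : ℝ → ℝ} {a b lam : ℝ} {u u' v v' : ℝ → ℝ}
    (hu : IsSol V' a b lam u u') (hv : IsSol V' a b lam v v') (A B : ℝ) :
    IsSol V' a b lam (fun t => A * u t + B * v t) (fun t => A * u' t + B * v' t) :=
  ⟨fun t ht => ((hu.1 t ht).const_mul A).add ((hv.1 t ht).const_mul B),
    fun t ht => (((hu.2 t ht).const_mul A).add ((hv.2 t ht).const_mul B)).congr_deriv
      (by ring)⟩

lemma isNeumannEig_iff_det_eq_zero {V' f g f' g' : ℝ → ℝ} {a b lam : ℝ} (hab : a < b)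
    (hf : IsSol V' a b lam f f') (hg : IsSol V' a b lam g g')
    (hindep : ∀ A B : ℝ, (∀ t ∈ Icc a b, A * f t + B * g t = 0) → A = 0 ∧ B = 0)
    (hbasis : ∀ u u' : ℝ → ℝ, IsSol V' a b lam u u' →
      ∃ A B : ℝ, ∀ t ∈ Icc a b, u t = A * f t + B * g t) :
    IsNeumannEig V' a b lam ↔ f' a * g' b - f' b * g' a = 0 := by
  have haI : a ∈ Icc a b := left_mem_Icc.2 hab.le
  have hbI : b ∈ Icc a b := right_mem_Icc.2 hab.le
  set M : Matrix (Fin 2) (Fin 2) ℝ := !![f' a, g' a; f' b, g' b]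
  have hM : ∀ A B : ℝ, M.mulVec ![A, B] = ![A * f' a + B * g' a, A * f' b + B * g' b] := by
    intro A B
    ext i
    fin_cases i <;> simp [M, Matrix.mulVec, dotProduct, Fin.sum_univ_two] <;> ring
  rw [show f' a * g' b - f' b * g' a = M.det by simp [M, Matrix.det_fin_two_of]; ring,
    ← Matrix.exists_mulVec_eq_zero_iff]
  constructor
  · rintro ⟨u, u', hu, ⟨x, hx, hux⟩, hua, hub⟩
    obtain ⟨A, B, hAB⟩ := hbasis u u' hu
    have hcomb := (hf.linComb hg A B).1
    refine ⟨![A, B], fun h => hux ?_, ?_⟩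
    · rw [hAB x hx, show A = 0 from congrFun h 0, show B = 0 from congrFun h 1]
      ring
    · have ha : u' a = A * f' a + B * g' a :=
        (hu.1 a haI).unique_of_eqOn_Icc (hcomb a haI) hab haI hAB
      have hb : u' b = A * f' b + B * g' b :=
        (hu.1 b hbI).unique_of_eqOn_Icc (hcomb b hbI) hab hbI hAB
      rw [hM, ← ha, ← hb, hua, hub]
      simp
  · rintro ⟨v, hv, hMv⟩
    have hv2 : v = ![v 0, v 1] := by ext i; fin_cases i <;> rfl
    rw [hv2, hM] at hMv
    refine ⟨_, _, hf.linComb hg (v 0) (v 1), ?_, by simpa using congrFun hMv 0,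
      by simpa using congrFun hMv 1⟩
    by_contra! h
    obtain ⟨h0, h1⟩ := hindep (v 0) (v 1) h
    exact hv (by rw [hv2, h0, h1]; simp)

/-- `IsSol` with the equation required only on `(a, b)`, where `V'` is meaningful, and `u'`
continuous up to the boundary; this class is stable under reflection and restriction. -/
def IsInteriorSol (V' : ℝ → ℝ) (a b lam : ℝ) (u u' : ℝ → ℝ) : Prop :=
  (∀ t ∈ Icc a b, HasDerivAt u (u' t) t) ∧ ContinuousOn u' (Icc a b) ∧
    ∀ t ∈ Ioo a b, HasDerivAt u' (V' t * u' t - lam * u t) t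

lemma IsSol.isInteriorSol {V' : ℝ → ℝ} {a b lam : ℝ} {u u' : ℝ → ℝ}
    (h : IsSol V' a b lam u u') : IsInteriorSol V' a b lam u u' :=
  ⟨h.1, fun t ht => (h.2 t ht).continuousAt.continuousWithinAt,
    fun t ht => h.2 t (Ioo_subset_Icc_self ht)⟩

noncomputable def phase (V u u' : ℝ → ℝ) (t : ℝ) : ℝ × ℝ := (u t, u' t * exp (-V t))

lemma phase_eq_zero_iff {V u u' : ℝ → ℝ} {t : ℝ} :
    phase V u u' t = 0 ↔ u t = 0 ∧ u' t = 0 := by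
  simp [phase, Prod.ext_iff, (exp_pos _).ne']

lemma hasDerivAt_momentum {V V' u u' : ℝ → ℝ} {lam t : ℝ} (hV : HasDerivAt V (V' t) t)
    (hu' : HasDerivAt u' (V' t * u' t - lam * u t) t) :
    HasDerivAt (fun s => u' s * exp (-V s)) (-lam * u t * exp (-V t)) t :=
  (hu'.mul hV.neg.exp).congr_deriv (by simp only [Pi.neg_apply]; ring)

lemma norm_phase_field_sub_le {x y r v lam₁ lam₂ K R : ℝ} (hv : |v| ≤ K) (hr : |r| ≤ R) :
    ‖(y, -lam₁ * x * exp (-v) - (lam₁ - lam₂) * r * exp (-v))‖ ≤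
      (1 + |lam₁|) * exp K * ‖(x, y * exp (-v))‖ + |lam₁ - lam₂| * (exp K * R) := by
  obtain ⟨hvl, hvu⟩ := abs_le.1 hv
  set N := ‖(x, y * exp (-v))‖
  have hE : exp (-v) ≤ exp K := exp_le_exp.2 (by linarith)
  have hx : |x| ≤ N := le_max_left _ _
  have hy : |y| * exp (-v) ≤ N := by simp [N, abs_of_pos (exp_pos (-v))]
  have h1 : |y| ≤ exp K * N := by
    have : |y| = |y| * exp (-v) * exp v := by
      rw [mul_assoc, ← exp_add, neg_add_cancel, exp_zero, mul_one]
    rw [this, mul_comm (exp K)]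
    exact mul_le_mul hy (exp_le_exp.2 hvu) (exp_pos v).le (norm_nonneg _)
  have h2 : |-lam₁ * x * exp (-v) - (lam₁ - lam₂) * r * exp (-v)| ≤
      |lam₁| * (exp K * N) + |lam₁ - lam₂| * (exp K * R) := by
    refine (abs_sub _ _).trans (add_le_add ?_ ?_)
    · rw [abs_mul, abs_mul, abs_neg, abs_of_pos (exp_pos _), mul_assoc, mul_comm (exp K)]
      exact mul_le_mul_of_nonneg_left (mul_le_mul hx hE (exp_pos _).le (norm_nonneg _))
        (abs_nonneg _)
    · rw [abs_mul, abs_mul, abs_of_pos (exp_pos _), mul_assoc, mul_comm (exp K)]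
      exact mul_le_mul_of_nonneg_left (mul_le_mul hr hE (exp_pos _).le ((abs_nonneg r).trans hr))
        (abs_nonneg _)
  have : 0 ≤ |lam₁| * (exp K * N) := by positivity
  have : 0 ≤ |lam₁ - lam₂| * (exp K * R) := mul_nonneg (abs_nonneg _)
    (mul_nonneg (exp_pos K).le ((abs_nonneg r).trans hr))
  rw [Prod.norm_def, max_le_iff, Real.norm_eq_abs, Real.norm_eq_abs]
  constructor <;> nlinarith [norm_nonneg (x, y * exp (-v)), exp_pos K]

namespace IsInteriorSol

variable {V V' : ℝ → ℝ} {a b lam : ℝ} {u u' v v' p p' : ℝ → ℝ}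

lemma continuousOn (h : IsInteriorSol V' a b lam u u') : ContinuousOn u (Icc a b) :=
  fun t ht => (h.1 t ht).continuousAt.continuousWithinAt

lemma zero : IsInteriorSol V' a b lam 0 0 :=
  ⟨fun t _ => hasDerivAt_const t 0, continuousOn_const,
    fun t _ => by simp⟩

lemma linComb (hu : IsInteriorSol V' a b lam u u') (hv : IsInteriorSol V' a b lam v v')
    (A B : ℝ) :
    IsInteriorSol V' a b lam (fun t => A * u t + B * v t) (fun t => A * u' t + B * v' t) :=
  ⟨fun t ht => ((hu.1 t ht).const_mul A).add ((hv.1 t ht).const_mul B),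
    (hu.2.1.const_smul A).add (hv.2.1.const_smul B),
    fun t ht => (((hu.2.2 t ht).const_mul A).add ((hv.2.2 t ht).const_mul B)).congr_deriv
      (by ring)⟩

lemma const_mul (hu : IsInteriorSol V' a b lam u u') (A : ℝ) :
    IsInteriorSol V' a b lam (fun t => A * u t) (fun t => A * u' t) := by
  simpa using hu.linComb hu A 0

lemma mono {c d : ℝ} (h : IsInteriorSol V' a b lam u u') (hac : a ≤ c) (hdb : d ≤ b) :
    IsInteriorSol V' c d lam u u' :=
  ⟨fun t ht => h.1 t ⟨hac.trans ht.1, ht.2.trans hdb⟩,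
    h.2.1.mono fun _ ht => ⟨hac.trans ht.1, ht.2.trans hdb⟩,
    fun t ht => h.2.2 t ⟨hac.trans_lt ht.1, ht.2.trans_le hdb⟩⟩

lemma comp_neg (h : IsInteriorSol V' a b lam u u') :
    IsInteriorSol (fun s => -V' (-s)) (-b) (-a) lam (fun s => u (-s)) (fun s => -u' (-s)) := by
  refine ⟨fun t ht => ?_, ?_, fun t ht => ?_⟩
  · have := (h.1 (-t) ⟨le_neg.1 ht.2, neg_le.1 ht.1⟩).comp t (hasDerivAt_neg t)
    exact this.congr_deriv (by ring)
  · exact (h.2.1.comp continuousOn_neg fun t ht => ⟨le_neg.1 ht.2, neg_le.1 ht.1⟩).neg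
  · have := ((h.2.2 (-t) ⟨lt_neg.1 ht.2, neg_lt.1 ht.1⟩).comp t (hasDerivAt_neg t)).neg
    exact this.congr_deriv (by ring)

lemma congr_potential {W' : ℝ → ℝ} (h : IsInteriorSol V' a b lam u u')
    (hW : ∀ t ∈ Ioo a b, W' t = V' t) : IsInteriorSol W' a b lam u u' :=
  ⟨h.1, h.2.1, fun t ht => by simpa only [hW t ht] using h.2.2 t ht⟩

lemma continuousOn_phase (h : IsInteriorSol V' a b lam u u') (hVc : ContinuousOn V (Icc a b)) :
    ContinuousOn (phase V u u') (Icc a b) :=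
  h.continuousOn.prodMk (h.2.1.mul (continuous_exp.comp_continuousOn hVc.neg))

lemma hasDerivAt_phase (h : IsInteriorSol V' a b lam u u')
    (hV' : ∀ t ∈ Ioo a b, HasDerivAt V (V' t) t) {t : ℝ} (ht : t ∈ Ioo a b) :
    HasDerivAt (phase V u u') (u' t, -lam * u t * exp (-V t)) t :=
  (h.1 t (Ioo_subset_Icc_self ht)).prodMk (hasDerivAt_momentum (hV' t ht) (h.2.2 t ht))

lemma norm_phase_sub_le_of_lt {lam₁ lam₂ K R t₀ t₁ : ℝ} {p p' q q' : ℝ → ℝ}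
    (hp : IsInteriorSol V' a b lam₁ p p') (hq : IsInteriorSol V' a b lam₂ q q')
    (hVc : ContinuousOn V (Icc a b)) (hV' : ∀ t ∈ Ioo a b, HasDerivAt V (V' t) t)
    (ht₀ : a < t₀) (ht₁ : t₁ ≤ b) (hK : ∀ t ∈ Icc t₀ t₁, |V t| ≤ K)
    (hR : ∀ t ∈ Icc t₀ t₁, |q t| ≤ R) :
    ∀ t ∈ Icc t₀ t₁, ‖phase V p p' t - phase V q q' t‖ ≤
      (‖phase V p p' t₀ - phase V q q' t₀‖ + |lam₁ - lam₂| * (exp K * R) * (t - t₀)) *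
        exp ((1 + |lam₁|) * exp K * (t - t₀)) := by
  intro t ht
  have hR0 : 0 ≤ R := (abs_nonneg _).trans (hR t ht)
  have hF : ∀ s ∈ Ico t₀ t₁, HasDerivWithinAt (fun s => phase V p p' s - phase V q q' s)
      (p' s - q' s, -lam₁ * (p s - q s) * exp (-V s) - (lam₁ - lam₂) * q s * exp (-V s))
      (Ici s) s := by
    intro s hs
    have hs' : s ∈ Ioo a b := ⟨ht₀.trans_le hs.1, hs.2.trans_le ht₁⟩
    refine (((hp.hasDerivAt_phase hV' hs').sub (hq.hasDerivAt_phase hV' hs')).congr_deriv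
      ?_).hasDerivWithinAt
    simp only [Prod.mk_sub_mk]
    ring_nf
  have hbound : ∀ s ∈ Ico t₀ t₁,
      ‖(p' s - q' s, -lam₁ * (p s - q s) * exp (-V s) - (lam₁ - lam₂) * q s * exp (-V s))‖ ≤
        (1 + |lam₁|) * exp K * ‖phase V p p' s - phase V q q' s‖ +
          |lam₁ - lam₂| * (exp K * R) := fun s hs => by
    simpa [phase, sub_mul] using norm_phase_field_sub_le (x := p s - q s) (y := p' s - q' s)
      (lam₁ := lam₁) (lam₂ := lam₂) (hK s (Ico_subset_Icc_self hs)) (hR s (Ico_subset_Icc_self hs))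
  exact (norm_le_gronwallBound_of_norm_deriv_right_le
    (((hp.continuousOn_phase hVc).sub (hq.continuousOn_phase hVc)).mono (Icc_subset_Icc ht₀.le ht₁))
    hF le_rfl hbound t ht).trans (gronwallBound_le_add_mul_exp (by positivity) (by positivity))

lemma norm_phase_sub_le {lam₁ lam₂ K R t₀ t₁ : ℝ} {p p' q q' : ℝ → ℝ}
    (hp : IsInteriorSol V' a b lam₁ p p') (hq : IsInteriorSol V' a b lam₂ q q')
    (hVc : ContinuousOn V (Icc a b)) (hV' : ∀ t ∈ Ioo a b, HasDerivAt V (V' t) t)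
    (ht₀ : a ≤ t₀) (ht₁ : t₁ ≤ b) (hK : ∀ t ∈ Icc t₀ t₁, |V t| ≤ K)
    (hR : ∀ t ∈ Icc t₀ t₁, |q t| ≤ R) :
    ∀ t ∈ Icc t₀ t₁, ‖phase V p p' t - phase V q q' t‖ ≤
      (‖phase V p p' t₀ - phase V q q' t₀‖ + |lam₁ - lam₂| * (exp K * R) * (t - t₀)) *
        exp ((1 + |lam₁|) * exp K * (t - t₀)) := by
  intro t ht
  rcases ht.1.eq_or_lt with rfl | hlt
  · simp
  -- Start at every `s ∈ (t₀, t)`, where the equation holds, and let `s → t₀`.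
  set B := fun s => (‖phase V p p' s - phase V q q' s‖ + |lam₁ - lam₂| * (exp K * R) * (t - s)) *
    exp ((1 + |lam₁|) * exp K * (t - s))
  have hle : ∀ s ∈ Ioo t₀ t, ‖phase V p p' t - phase V q q' t‖ ≤ B s := fun s hs =>
    hp.norm_phase_sub_le_of_lt hq hVc hV' (ht₀.trans_lt hs.1) ht₁
      (fun x hx => hK x ⟨hs.1.le.trans hx.1, hx.2⟩) (fun x hx => hR x ⟨hs.1.le.trans hx.1, hx.2⟩)
      t ⟨hs.2.le, ht.2⟩
  have hsub : Ioo t₀ t ⊆ Icc a b := fun s hs => ⟨ht₀.trans hs.1.le, hs.2.le.trans (ht.2.trans ht₁)⟩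
  have hB : ContinuousWithinAt B (Ioo t₀ t) t₀ :=
    (((((hp.continuousOn_phase hVc).sub (hq.continuousOn_phase hVc)) t₀
      ⟨ht₀, ht.1.trans (ht.2.trans ht₁)⟩).mono hsub).norm.add (by fun_prop)).mul (by fun_prop)
  have : (𝓝[Ioo t₀ t] t₀).NeBot := by rw [nhdsWithin_Ioo_eq_nhdsGT hlt]; infer_instance
  exact ge_of_tendsto hB.tendsto (eventually_nhdsWithin_of_forall hle)

lemma norm_phase_le {K t₀ t₁ : ℝ} (hu : IsInteriorSol V' a b lam u u')
    (hVc : ContinuousOn V (Icc a b)) (hV' : ∀ t ∈ Ioo a b, HasDerivAt V (V' t) t)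
    (ht₀ : a ≤ t₀) (ht₁ : t₁ ≤ b) (hK : ∀ t ∈ Icc t₀ t₁, |V t| ≤ K) :
    ∀ t ∈ Icc t₀ t₁,
      ‖phase V u u' t‖ ≤ ‖phase V u u' t₀‖ * exp ((1 + |lam|) * exp K * (t - t₀)) := by
  intro t ht
  simpa [phase] using
    hu.norm_phase_sub_le (zero (lam := lam)) hVc hV' ht₀ ht₁ hK (R := 0) (by simp) t ht

lemma eq_zero_of_eq_zero_left {t₀ : ℝ} (hu : IsInteriorSol V' a b lam u u')
    (hVc : ContinuousOn V (Icc a b)) (hV' : ∀ t ∈ Ioo a b, HasDerivAt V (V' t) t)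
    (ht₀ : t₀ ∈ Icc a b) (hu₀ : u t₀ = 0) (hu₀' : u' t₀ = 0) :
    ∀ t ∈ Icc t₀ b, u t = 0 ∧ u' t = 0 := by
  obtain ⟨K, hK⟩ := isCompact_Icc.exists_bound_of_continuousOn hVc
  intro t ht
  have := hu.norm_phase_le hVc hV' ht₀.1 le_rfl
    (fun x hx => hK x ⟨ht₀.1.trans hx.1, hx.2⟩) t ht
  rwa [phase_eq_zero_iff.2 ⟨hu₀, hu₀'⟩, norm_zero, zero_mul, norm_le_zero_iff,
    phase_eq_zero_iff] at this

lemma eq_zero_of_eq_zero {t₀ : ℝ} (hu : IsInteriorSol V' a b lam u u')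
    (hVc : ContinuousOn V (Icc a b)) (hV' : ∀ t ∈ Ioo a b, HasDerivAt V (V' t) t)
    (ht₀ : t₀ ∈ Icc a b) (hu₀ : u t₀ = 0) (hu₀' : u' t₀ = 0) :
    ∀ t ∈ Icc a b, u t = 0 ∧ u' t = 0 := by
  intro t ht
  rcases le_total t₀ t with h | h
  · exact hu.eq_zero_of_eq_zero_left hVc hV' ht₀ hu₀ hu₀' t ⟨h, ht.2⟩
  have hVc' : ContinuousOn (fun s => V (-s)) (Icc (-b) (-a)) :=
    hVc.comp continuousOn_neg fun s hs => ⟨le_neg.1 hs.2, neg_le.1 hs.1⟩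
  have hV'' : ∀ s ∈ Ioo (-b) (-a), HasDerivAt (fun s => V (-s)) (-V' (-s)) s := fun s hs =>
    ((hV' (-s) ⟨lt_neg.1 hs.2, neg_lt.1 hs.1⟩).comp s (hasDerivAt_neg s)).congr_deriv (by ring)
  have := hu.comp_neg.eq_zero_of_eq_zero_left hVc' hV'' ⟨neg_le_neg ht₀.2, neg_le_neg ht₀.1⟩
    (by simpa using hu₀) (by simpa using hu₀') (-t) ⟨neg_le_neg h, neg_le_neg ht.1⟩
  simpa using this

lemma wronskian_eq (hu : IsInteriorSol V' a b lam u u') (hv : IsInteriorSol V' a b lam v v')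
    (hVc : ContinuousOn V (Icc a b)) (hV' : ∀ t ∈ Ioo a b, HasDerivAt V (V' t) t) :
    ∀ t ∈ Icc a b, u t * (v' t * exp (-V t)) - v t * (u' t * exp (-V t)) =
      u a * (v' a * exp (-V a)) - v a * (u' a * exp (-V a)) := by
  have hE : ContinuousOn (fun t => exp (-V t)) (Icc a b) := continuous_exp.comp_continuousOn hVc.neg
  refine eq_of_hasDerivAt_zero ((hu.continuousOn.mul (hv.2.1.mul hE)).sub
    (hv.continuousOn.mul (hu.2.1.mul hE))) fun t ht => ?_
  have hI := Ioo_subset_Icc_self ht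
  exact (((hu.1 t hI).mul (hasDerivAt_momentum (hV' t ht) (hv.2.2 t ht))).sub
    ((hv.1 t hI).mul (hasDerivAt_momentum (hV' t ht) (hu.2.2 t ht)))).congr_deriv (by ring)

/-- A Neumann eigenfunction with positive eigenvalue vanishes somewhere: otherwise it has a sign,
and the momentum `e^{-V} u'`, which vanishes at both ends, would be strictly monotone. -/
lemma exists_eq_zero (hu : IsInteriorSol V' a b lam u u') (hVc : ContinuousOn V (Icc a b))
    (hV' : ∀ t ∈ Ioo a b, HasDerivAt V (V' t) t) (hlam : 0 < lam) (hab : a < b)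
    (ha : u' a = 0) (hb : u' b = 0) : ∃ c ∈ Icc a b, u c = 0 := by
  by_contra! h
  have hsign : ∀ t ∈ Icc a b, 0 < u a * u t := fun t ht =>
    mul_pos_of_forall_ne_zero ht.1 (hu.continuousOn.mono (Icc_subset_Icc_right ht.2))
      fun x hx => h x ⟨hx.1, hx.2.trans ht.2⟩
  have hanti : StrictAntiOn (fun t => u' t * exp (-V t) * u a) (Icc a b) := by
    refine strictAntiOn_of_deriv_neg (convex_Icc a b)
      ((hu.2.1.mul (continuous_exp.comp_continuousOn hVc.neg)).mul continuousOn_const)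
      fun t ht => ?_
    rw [interior_Icc] at ht
    rw [((hasDerivAt_momentum (hV' t ht) (hu.2.2 t ht)).mul_const (u a)).deriv]
    have := mul_pos hlam (mul_pos (exp_pos (-V t)) (hsign t (Ioo_subset_Icc_self ht)))
    linarith [show -lam * u t * exp (-V t) * u a = -(lam * (exp (-V t) * (u a * u t))) by ring]
  have := hanti ⟨le_rfl, hab.le⟩ ⟨hab.le, le_rfl⟩ hab
  simp only [ha, hb, zero_mul, lt_irrefl] at this

lemma exists_norm_phase_sub_le_mul {p p' : ℝ → ℝ → ℝ} {t₀ : ℝ} {z : ℝ × ℝ}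
    (hp : ∀ μ, IsInteriorSol V' a b μ (p μ) (p' μ)) (hVc : ContinuousOn V (Icc a b))
    (hV' : ∀ t ∈ Ioo a b, HasDerivAt V (V' t) t) (ht₀ : a ≤ t₀)
    (hz : ∀ μ, phase V (p μ) (p' μ) t₀ = z) (Λ : ℝ) :
    ∃ C, ∀ μ₁ μ₂, |μ₁| ≤ Λ → |μ₂| ≤ Λ → ∀ t ∈ Icc t₀ b,
      ‖phase V (p μ₁) (p' μ₁) t - phase V (p μ₂) (p' μ₂) t‖ ≤ C * |μ₁ - μ₂| := by
  obtain ⟨K, hK⟩ := isCompact_Icc.exists_bound_of_continuousOn hVc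
  have hK' : ∀ t ∈ Icc t₀ b, |V t| ≤ K := fun t ht => hK t ⟨ht₀.trans ht.1, ht.2⟩
  set E := exp ((1 + Λ) * exp K * (b - a))
  have hexp : ∀ μ, |μ| ≤ Λ → ∀ t ∈ Icc t₀ b, exp ((1 + |μ|) * exp K * (t - t₀)) ≤ E := by
    intro μ hμ t ht
    refine exp_le_exp.2 ?_
    have hΛ : 0 ≤ 1 + Λ := by linarith [abs_nonneg μ]
    have ht0 : 0 ≤ t - t₀ := sub_nonneg.2 ht.1
    gcongr
    exact ht.2
  have hR : ∀ μ, |μ| ≤ Λ → ∀ t ∈ Icc t₀ b, |p μ t| ≤ ‖z‖ * E := by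
    intro μ hμ t ht
    calc |p μ t| ≤ ‖phase V (p μ) (p' μ) t‖ := norm_fst_le (phase V (p μ) (p' μ) t)
      _ ≤ ‖z‖ * exp ((1 + |μ|) * exp K * (t - t₀)) :=
        hz μ ▸ (hp μ).norm_phase_le hVc hV' ht₀ le_rfl hK' t ht
      _ ≤ ‖z‖ * E := by gcongr; exact hexp μ hμ t ht
  refine ⟨exp K * (‖z‖ * E) * (b - a) * E, fun μ₁ μ₂ hμ₁ hμ₂ t ht => ?_⟩
  have := (hp μ₁).norm_phase_sub_le (hp μ₂) hVc hV' ht₀ le_rfl hK' (hR μ₂ hμ₂) t ht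
  rw [hz, hz, sub_self, norm_zero, zero_add] at this
  refine this.trans ?_
  have hba : 0 ≤ b - a := by linarith [ht.1, ht.2]
  have hR0 : 0 ≤ exp K * (‖z‖ * E) :=
    mul_nonneg (exp_pos K).le (mul_nonneg (norm_nonneg z) (exp_pos _).le)
  calc |μ₁ - μ₂| * (exp K * (‖z‖ * E)) * (t - t₀) * exp ((1 + |μ₁|) * exp K * (t - t₀))
      ≤ |μ₁ - μ₂| * (exp K * (‖z‖ * E)) * (b - a) * E := by
        gcongr
        exacts [ht.2, hexp μ₁ hμ₁ t ht]
    _ = exp K * (‖z‖ * E) * (b - a) * E * |μ₁ - μ₂| := by ring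

lemma eq_zero_of_deriv_nonneg {ts : ℝ} (hp : IsInteriorSol V' a b lam p p')
    (hVc : ContinuousOn V (Icc a b)) (hV' : ∀ t ∈ Ioo a b, HasDerivAt V (V' t) t)
    (hlam : lam ≠ 0) (hnn : ∀ t ∈ Icc a b, 0 ≤ p' t) (hts : ts ∈ Ioo a b) (hzero : p' ts = 0) :
    ∀ t ∈ Icc a b, p t = 0 ∧ p' t = 0 := by
  have hmin : IsLocalMin (fun t => p' t * exp (-V t)) ts := by
    filter_upwards [Icc_mem_nhds hts.1 hts.2] with t ht
    rw [hzero, zero_mul]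
    exact mul_nonneg (hnn t ht) (exp_pos _).le
  have := hmin.hasDerivAt_eq_zero (hasDerivAt_momentum (hV' ts hts) (hp.2.2 ts hts))
  have hpts : p ts = 0 := by simpa [hlam, (exp_pos _).ne'] using this
  exact hp.eq_zero_of_eq_zero hVc hV' (Ioo_subset_Icc_self hts) hpts hzero

lemma exists_deriv_nonpos (hu : IsInteriorSol V' a b lam u u') (hp : IsInteriorSol V' a b lam p p')
    (hVc : ContinuousOn V (Icc a b)) (hV' : ∀ t ∈ Ioo a b, HasDerivAt V (V' t) t)
    (hlam : 0 < lam) (hab : a < b) (hua : u' a = 0) (hub : u' b = 0) (hub0 : u b ≠ 0)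
    (hpa : p a = 0) : ∃ t ∈ Icc a b, p' t ≤ 0 := by
  by_contra! hpos
  have hmono : StrictMonoOn p (Icc a b) := by
    refine strictMonoOn_of_deriv_pos (convex_Icc a b) hp.continuousOn fun t ht => ?_
    rw [interior_Icc] at ht
    rw [(hp.1 t (Ioo_subset_Icc_self ht)).deriv]
    exact hpos t (Ioo_subset_Icc_self ht)
  obtain ⟨c, hc, huc⟩ := hu.exists_eq_zero hVc hV' hlam hab hua hub
  obtain ⟨s, hs, hus, hsign⟩ := exists_zero_deriv_mul_nonneg hc.2
    (fun t ht => hu.1 t ⟨hc.1.trans ht.1, ht.2⟩) huc hub0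
  have hsI : s ∈ Icc a b := ⟨hc.1.trans hs.1, hs.2⟩
  have hps : 0 ≤ p s := hpa ▸ hmono.monotoneOn (left_mem_Icc.2 hab.le) hsI hsI.1
  have hW := (hp.wronskian_eq hu hVc hV' s hsI).trans
    (hp.wronskian_eq hu hVc hV' b (right_mem_Icc.2 hab.le)).symm
  rw [hus, hub, zero_mul, zero_mul, sub_zero, mul_zero, zero_sub] at hW
  have h1 : 0 ≤ p s * (u' s * u b) * exp (-V s) :=
    mul_nonneg (mul_nonneg hps hsign) (exp_pos _).le
  have h2 : 0 < u b ^ 2 * p' b * exp (-V b) :=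
    mul_pos (mul_pos (pow_two_pos_of_ne_zero hub0) (hpos b (right_mem_Icc.2 hab.le))) (exp_pos _)
  nlinarith [congrArg (· * u b) hW]

end IsInteriorSol

lemma exists_mem_Ioc_deriv_eq_zero {V V' u u' : ℝ → ℝ} {p p' : ℝ → ℝ → ℝ} {a b lam : ℝ}
    (hVc : ContinuousOn V (Icc a b)) (hV' : ∀ t ∈ Ioo a b, HasDerivAt V (V' t) t)
    (hlam : 0 < lam) (hab : a < b) (hu : IsInteriorSol V' a b lam u u') (hua : u' a = 0)
    (hub : u' b = 0) (hunz : ∃ x ∈ Icc a b, u x ≠ 0)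
    (hp : ∀ μ, IsInteriorSol V' a b μ (p μ) (p' μ)) (hpa : ∀ μ, p μ a = 0)
    (hp'a : ∀ μ, p' μ a = 1) : ∃ μ ∈ Ioc 0 lam, p' μ b = 0 := by
  have haI : a ∈ Icc a b := left_mem_Icc.2 hab.le
  have hbI : b ∈ Icc a b := right_mem_Icc.2 hab.le
  set m := fun μ t => p' μ t * exp (-V t)
  have hub0 : u b ≠ 0 := by
    obtain ⟨x, hx, hux⟩ := hunz
    exact fun h => hux (hu.eq_zero_of_eq_zero hVc hV' hbI h hub x hx).1
  obtain ⟨C, hC⟩ := IsInteriorSol.exists_norm_phase_sub_le_mul hp hVc hV' le_rfl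
    (z := (0, exp (-V a))) (fun μ => by simp [phase, hpa, hp'a]) lam
  have hlip : ∀ μ₁ ∈ Icc 0 lam, ∀ μ₂ ∈ Icc 0 lam, ∀ t ∈ Icc a b,
      |m μ₁ t - m μ₂ t| ≤ C * |μ₁ - μ₂| := fun μ₁ h₁ μ₂ h₂ t ht =>
    (norm_snd_le _).trans (hC μ₁ μ₂ (abs_le.2 ⟨by linarith [h₁.1], h₁.2⟩)
      (abs_le.2 ⟨by linarith [h₂.1], h₂.2⟩) t ht)
  have hm0 : ∀ t ∈ Icc a b, 0 < m 0 t := by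
    intro t ht
    rw [eq_of_hasDerivAt_zero (f := m 0) ((hp 0).2.1.mul (continuous_exp.comp_continuousOn hVc.neg))
      (fun s hs => by simpa using hasDerivAt_momentum (hV' s hs) ((hp 0).2.2 s hs)) t ht]
    simp [m, hp'a, exp_pos]
  have hmlam : ∃ t ∈ Icc a b, m lam t ≤ 0 := by
    obtain ⟨t, ht, hpt⟩ := hu.exists_deriv_nonpos (hp lam) hVc hV' hlam hab hua hub hub0 (hpa lam)
    exact ⟨t, ht, mul_nonpos_of_nonpos_of_nonneg hpt (exp_pos _).le⟩
  obtain ⟨μ, hμ, hnn, ts, hts, hts0⟩ := exists_pos_forall_nonneg_exists_eq_zero isCompact_Icc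
    ⟨a, haI⟩ hlam.le (fun μ _ => (hp μ).2.1.mul (continuous_exp.comp_continuousOn hVc.neg))
    hlip hm0 hmlam
  have hp'nn : ∀ t ∈ Icc a b, 0 ≤ p' μ t := fun t ht =>
    (mul_nonneg_iff_of_pos_right (exp_pos _)).1 (hnn t ht)
  have hp'ts : p' μ ts = 0 := by simpa [m, (exp_pos _).ne'] using hts0
  refine ⟨μ, hμ, ?_⟩
  rcases hts.2.eq_or_lt with rfl | htsb
  · exact hp'ts
  have htsa : a < ts := hts.1.lt_of_ne (by rintro rfl; simp [hp'a] at hp'ts)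
  have := ((hp μ).eq_zero_of_deriv_nonneg hVc hV' hμ.1.ne' hp'nn ⟨htsa, htsb⟩ hp'ts a haI).2
  simp [hp'a] at this

section Symmetric

variable {V V' u u' : ℝ → ℝ} {b lam : ℝ}

lemma neg_deriv_neg_of_even (hVe : ∀ t, V (-t) = V t)
    (hV' : ∀ t ∈ Ioo (-b) b, HasDerivAt V (V' t) t) : ∀ t ∈ Ioo (-b) b, -V' (-t) = V' t := by
  intro t ht
  have h := (hV' (-t) ⟨neg_lt_neg ht.2, neg_lt.1 ht.1⟩).comp t (hasDerivAt_neg t)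
  rw [show V ∘ Neg.neg = V from funext hVe] at h
  linarith [h.unique (hV' t ht)]

lemma IsInteriorSol.comp_neg_of_even (hu : IsInteriorSol V' (-b) b lam u u')
    (hVe : ∀ t, V (-t) = V t) (hV' : ∀ t ∈ Ioo (-b) b, HasDerivAt V (V' t) t) :
    IsInteriorSol V' (-b) b lam (fun s => u (-s)) (fun s => -u' (-s)) := by
  have := hu.comp_neg
  rw [neg_neg] at this
  exact this.congr_potential fun t ht => (neg_deriv_neg_of_even hVe hV' t ht).symm

lemma IsInteriorSol.deriv_eq_zero_of_not_even {g g' : ℝ → ℝ} (hu : IsInteriorSol V' (-b) b lam u u')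
    (hVe : ∀ t, V (-t) = V t) (hVc : ContinuousOn V (Icc (-b) b))
    (hV' : ∀ t ∈ Ioo (-b) b, HasDerivAt V (V' t) t) (hua : u' (-b) = 0) (hub : u' b = 0)
    (hne : ∃ x ∈ Icc (-b) b, u x ≠ u (-x)) (hg : IsInteriorSol V' (-b) b lam g g')
    (hgo : ∀ t, g (-t) = -g t) : g' b = 0 := by
  obtain ⟨x, hx, hux⟩ := hne
  have h0 : (0 : ℝ) ∈ Icc (-b) b := ⟨by linarith [hx.1, hx.2], by linarith [hx.1, hx.2]⟩
  have hg0 : g 0 = 0 := by linarith [show g 0 = -g 0 by simpa using hgo 0]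
  have hw := hu.linComb (hu.comp_neg_of_even hVe hV') 2⁻¹ (-2⁻¹)
  have hu'0 : u' 0 ≠ 0 := fun h => hux <| by
    have := (hw.eq_zero_of_eq_zero hVc hV' h0 (by simp) (by simp [h]) x hx).1
    linarith
  have := ((hw.linComb hg (g' 0) (-u' 0)).eq_zero_of_eq_zero hVc hV' h0 (by simp [hg0])
    (by simp only [neg_zero, mul_neg, neg_mul]; ring) b (right_mem_Icc.2 (h0.1.trans h0.2))).2
  simp only [hub, hua, mul_zero, neg_zero, add_zero, neg_mul, zero_add, neg_eq_zero,
    mul_eq_zero] at this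
  exact this.resolve_left hu'0

lemma exists_mem_Ioc_deriv_eq_zero_of_even {g g' : ℝ → ℝ → ℝ} (hb : 0 < b)
    (hVc : ContinuousOn V (Icc (-b) b)) (hV' : ∀ t ∈ Ioo (-b) b, HasDerivAt V (V' t) t)
    (hlam : 0 < lam) (hu : IsSol V' (-b) b lam u u') (hub : u' b = 0)
    (hueven : ∀ t ∈ Icc (-b) b, u (-t) = u t) (hunz : ∃ x ∈ Icc (-b) b, u x ≠ 0)
    (hg : ∀ μ, IsInteriorSol V' (-b) b μ (g μ) (g' μ)) (hg0 : ∀ μ, g μ 0 = 0)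
    (hg'0 : ∀ μ, g' μ 0 ≠ 0) : ∃ μ ∈ Ioc 0 lam, g' μ b = 0 := by
  have h0 : (0 : ℝ) ∈ Icc (-b) b := ⟨by linarith, hb.le⟩
  have hu0 : u' 0 = 0 := by
    have := (hu.1 0 h0).unique_of_eqOn_Icc ((hu.1 (-0) (by simpa using h0)).comp 0
      (hasDerivAt_neg 0)) (by linarith) h0 fun t ht => (hueven t ht).symm
    simp only [neg_zero, mul_neg, mul_one] at this
    linarith
  have hunz' : ∃ x ∈ Icc 0 b, u x ≠ 0 := by
    obtain ⟨x, hx, hux⟩ := hunz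
    rcases le_total 0 x with h | h
    · exact ⟨x, ⟨h, hx.2⟩, hux⟩
    · exact ⟨-x, ⟨neg_nonneg.2 h, by linarith [hx.1]⟩, (hueven x hx).symm ▸ hux⟩
  obtain ⟨μ, hμ, hμb⟩ := exists_mem_Ioc_deriv_eq_zero (hVc.mono (Icc_subset_Icc_left h0.1))
    (fun t ht => hV' t ⟨by linarith [ht.1], ht.2⟩) hlam hb
    (hu.isInteriorSol.mono h0.1 le_rfl) hu0 hub hunz'
    (p := fun μ t => (g' μ 0)⁻¹ * g μ t) (p' := fun μ t => (g' μ 0)⁻¹ * g' μ t)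
    (fun μ => ((hg μ).const_mul _).mono h0.1 le_rfl) (fun μ => by simp [hg0])
    (fun μ => inv_mul_cancel₀ (hg'0 μ))
  exact ⟨μ, hμ, by simpa [hg'0 μ] using hμb⟩

end Symmetric

lemma sInf_isNeumannEig_eq_of_even {V V' : ℝ → ℝ} {g g' : ℝ → ℝ → ℝ} {b : ℝ} (hb : -b < b)
    (hVe : ∀ t, V (-t) = V t) (hVc : ContinuousOn V (Icc (-b) b))
    (hV' : ∀ t ∈ Ioo (-b) b, HasDerivAt V (V' t) t)
    (hg : ∀ lam, IsSol V' (-b) b lam (g lam) (g' lam))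
    (hgo : ∀ lam t, g lam (-t) = -g lam t) (hgnz : ∀ lam, ∃ x ∈ Icc (-b) b, g lam x ≠ 0) :
    sInf {lam | 0 < lam ∧ IsNeumannEig V' (-b) b lam} = sInf {lam | 0 < lam ∧ g' lam b = 0} := by
  have h0 : (0 : ℝ) ∈ Icc (-b) b := ⟨by linarith, by linarith⟩
  have hg0 : ∀ lam, g lam 0 = 0 := fun lam => by
    linarith [show g lam 0 = -g lam 0 by simpa using hgo lam 0]
  have hg'0 : ∀ lam, g' lam 0 ≠ 0 := fun lam h => by
    obtain ⟨x, hx, hgx⟩ := hgnz lam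
    exact hgx ((hg lam).isInteriorSol.eq_zero_of_eq_zero hVc hV' h0 (hg0 lam) h x hx).1
  have hg'b : ∀ lam, g' lam (-b) = g' lam b := fun lam => by
    have h := ((hg lam).1 (-b) (left_mem_Icc.2 hb.le)).comp b (hasDerivAt_neg b)
    rw [show g lam ∘ Neg.neg = fun t => -g lam t from funext (hgo lam)] at h
    linarith [h.unique ((hg lam).1 b (right_mem_Icc.2 hb.le)).neg]
  refine csInf_eq_csInf_of_forall_exists_le ?_ fun lam ⟨hlam, hgb⟩ =>
    ⟨lam, ⟨hlam, g lam, g' lam, hg lam, hgnz lam, (hg'b lam).trans hgb, hgb⟩, le_rfl⟩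
  rintro lam ⟨hlam, u, u', hu, hunz, hua, hub⟩
  by_cases hodd : ∃ x ∈ Icc (-b) b, u x ≠ u (-x)
  · exact ⟨lam, ⟨hlam, hu.isInteriorSol.deriv_eq_zero_of_not_even hVe hVc hV' hua hub hodd
      (hg lam).isInteriorSol (hgo lam)⟩, le_rfl⟩
  push Not at hodd
  obtain ⟨μ, hμ, hμb⟩ := exists_mem_Ioc_deriv_eq_zero_of_even (by linarith) hVc hV' hlam hu hub
    (fun t ht => (hodd t ht).symm) hunz (fun μ => (hg μ).isInteriorSol) hg0 hg'0
  exact ⟨μ, ⟨hμ.1, hμb⟩, hμ.2⟩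

/-- given a basis `f_λ, g_λ` of solutions of `u'' - V'u' = -λu`, the Neumann
eigenvalues are the zeros of `d(λ) = f_λ'(a)g_λ'(b) - f_λ'(b)g_λ'(a)`, so the spectral gap is
the first positive zero of `d`; and, in the even symmetric case with `g_λ` odd, the spectral
gap is the first positive zero of `λ ↦ g_λ'(b)`. -/
theorem stmt15 (a b : ℝ) (hab : a < b) (V V' : ℝ → ℝ)
    (hVc : ContinuousOn V (Set.Icc a b))
    (hV' : ∀ t ∈ Set.Ioo a b, HasDerivAt V (V' t) t)
    (f g f' g' : ℝ → ℝ → ℝ)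
    (hf : ∀ lam, IsSol V' a b lam (f lam) (f' lam))
    (hg : ∀ lam, IsSol V' a b lam (g lam) (g' lam))
    (hindep : ∀ lam A B : ℝ, (∀ t ∈ Set.Icc a b, A * f lam t + B * g lam t = 0) →
      A = 0 ∧ B = 0)
    (hbasis : ∀ lam, ∀ u u' : ℝ → ℝ, IsSol V' a b lam u u' →
      ∃ A B : ℝ, ∀ t ∈ Set.Icc a b, u t = A * f lam t + B * g lam t)
    (d : ℝ → ℝ) (hd : ∀ lam, d lam = f' lam a * g' lam b - f' lam b * g' lam a) :
    (∀ lam, 0 < lam → (IsNeumannEig V' a b lam ↔ d lam = 0)) ∧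
    sInf {lam | 0 < lam ∧ IsNeumannEig V' a b lam} = sInf {lam | 0 < lam ∧ d lam = 0} ∧
    ((∀ t, V (-t) = V t) → a = -b → (∀ lam t, g lam (-t) = - g lam t) →
      sInf {lam | 0 < lam ∧ IsNeumannEig V' a b lam}
        = sInf {lam | 0 < lam ∧ g' lam b = 0}) := by
  have heig : ∀ lam, IsNeumannEig V' a b lam ↔ d lam = 0 := fun lam => by
    rw [hd]
    exact isNeumannEig_iff_det_eq_zero hab (hf lam) (hg lam) (hindep lam) (hbasis lam)
  refine ⟨fun lam _ => heig lam, by simp_rw [heig], fun hVe hab' hgo => ?_⟩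
  subst hab'
  refine sInf_isNeumannEig_eq_of_even hab hVe hVc hV' hg hgo fun lam => ?_
  by_contra! h
  exact one_ne_zero (hindep lam 0 1 fun t ht => by simp [h t ht]).2
end
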